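/- arXiv:2511.20367 — 13 statements merged into one kernel-verified Lean document; each statement's English description precedes it below -/
import Mathlib

section
/- Let G=(V,E) be a finite simple graph. The map F defined by F(A) := 2·χ_A + χ_{V∖N[A]} is a bijection from the collection of all sets A ⊆ V such that every v ∈ A satisfies P_{G[N[A]],A}(v) ⊈ {v}, onto the set of all minimal Roman dominating functions of G. -/
open Set

variable {V : Type*}

/-- The set of vertices on which `f` takes value `i`. -/
def Vlevel (f : V → ℕ) (i : ℕ) : Set V := {v | f v = i}

/-- Closed neighborhood of `v` inside the induced subgraph `G[W]`. -/
def closedNbhdIn (G : SimpleGraph V) (W : Set V) (v : V) : Set V :=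
  {u ∈ W | u = v ∨ G.Adj u v}

/-- Closed neighborhood of a set `A` inside the induced subgraph `G[W]`. -/
def closedNbhdSetIn (G : SimpleGraph V) (W A : Set V) : Set V :=
  ⋃ u ∈ A, closedNbhdIn G W u

/-- Private neighborhood `P_{G[W],A}(v) = N[v] \ N[A \ {v}]` inside `G[W]`. -/
def privNbhd (G : SimpleGraph V) (W A : Set V) (v : V) : Set V :=
  closedNbhdIn G W v \ closedNbhdSetIn G W (A \ {v})

/-- Closed neighborhood `N[v]` in `G`. -/
def closedNbhd (G : SimpleGraph V) (v : V) : Set V := {u | u = v ∨ G.Adj u v}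

/-- Closed neighborhood `N[A]` of a set in `G`. -/
def closedNbhdSet (G : SimpleGraph V) (A : Set V) : Set V := ⋃ v ∈ A, closedNbhd G v

/-- Open neighborhood `N(A)` of a set in `G`. -/
def openNbhdSet (G : SimpleGraph V) (A : Set V) : Set V := ⋃ v ∈ A, G.neighborSet v

/-- Characteristic function of a set. -/
noncomputable def chi (S : Set V) : V → ℕ := S.indicator 1

/-- Roman dominating function: values in {0,1,2}, and every vertex of value 0 has
a neighbor of value 2. -/
def IsRDF (G : SimpleGraph V) (f : V → ℕ) : Prop :=
  (∀ v, f v ≤ 2) ∧ ∀ v, f v = 0 → ∃ u, G.Adj v u ∧ f u = 2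

/-- `f` is minimal with respect to the pointwise order among functions with property `P`. -/
def MinimalWrt (P : (V → ℕ) → Prop) (f : V → ℕ) : Prop :=
  P f ∧ ∀ g, P g → g ≤ f → g = f

/-- `C_{P,G}[A]`: minimal functions with property `P` whose set of vertices of value 2 is `A`. -/
def CSet (P : (V → ℕ) → Prop) (A : Set V) : Set (V → ℕ) :=
  {f | MinimalWrt P f ∧ Vlevel f 2 = A}

/-- Nice Roman domination property. -/
def IsNiceRDP (G : SimpleGraph V) (P : (V → ℕ) → Prop) : Prop :=
  (∀ f, P f → IsRDF G f) ∧
  (∀ f, P f → ∀ v ∈ Vlevel f 0, P (f + chi {v})) ∧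
  (∀ f, P f → ∀ v ∈ Vlevel f 2,
    (P (f - chi {v}) ↔ privNbhd G (Vlevel f 0 ∪ Vlevel f 2) (Vlevel f 2) v ⊆ {v}))

/-- Maximal Roman dominating function: an Rdf such that `V_0(f)` is not a dominating set. -/
def IsMRDF (G : SimpleGraph V) (f : V → ℕ) : Prop :=
  IsRDF G f ∧ closedNbhdSet G (Vlevel f 0) ≠ Set.univ

/-- Total Roman dominating function: an Rdf such that `G[V_1(f) ∪ V_2(f)]` has no isolated
vertices. -/
def IsTRDF (G : SimpleGraph V) (f : V → ℕ) : Prop :=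
  IsRDF G f ∧ ∀ v ∈ Vlevel f 1 ∪ Vlevel f 2, ∃ u ∈ Vlevel f 1 ∪ Vlevel f 2, G.Adj v u

/-- Connected Roman dominating function: an Rdf such that `G[V_1(f) ∪ V_2(f)]` is connected. -/
def IsCRDF (G : SimpleGraph V) (f : V → ℕ) : Prop :=
  IsRDF G f ∧ (G.induce (Vlevel f 1 ∪ Vlevel f 2)).Connected

-- auxiliary lemmas

lemma chi_mem' {S : Set V} {v : V} (h : v ∈ S) : chi S v = 1 := by
  simp [chi, Set.indicator_of_mem h]

lemma chi_notMem' {S : Set V} {v : V} (h : v ∉ S) : chi S v = 0 := by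
  simp [chi, Set.indicator_of_notMem h]

lemma mem_cns {G : SimpleGraph V} {A : Set V} {v : V} :
    v ∈ closedNbhdSet G A ↔ ∃ u ∈ A, v = u ∨ G.Adj v u := by
  simp [closedNbhdSet, closedNbhd]

lemma mem_cnsIn {G : SimpleGraph V} {W B : Set V} {v : V} :
    v ∈ closedNbhdSetIn G W B ↔ ∃ u ∈ B, v ∈ W ∧ (v = u ∨ G.Adj v u) := by
  simp only [closedNbhdSetIn, closedNbhdIn, mem_iUnion, mem_setOf_eq, mem_sep_iff]
  constructor
  · rintro ⟨u, hu, hW, h⟩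
    exact ⟨u, hu, hW, h⟩
  · rintro ⟨u, hu, hW, h⟩
    exact ⟨u, hu, hW, h⟩

lemma subset_cns {G : SimpleGraph V} {A : Set V} : A ⊆ closedNbhdSet G A := by
  intro v hv; exact mem_cns.2 ⟨v, hv, Or.inl rfl⟩

lemma Fval2 {G : SimpleGraph V} {A : Set V} {v : V} (h : v ∈ A) :
    2 * chi A v + chi (closedNbhdSet G A)ᶜ v = 2 := by
  rw [chi_mem' h, chi_notMem' (by simpa using subset_cns (G := G) h)]

lemma Fval0 {G : SimpleGraph V} {A : Set V} {v : V} (h1 : v ∈ closedNbhdSet G A)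
    (h2 : v ∉ A) : 2 * chi A v + chi (closedNbhdSet G A)ᶜ v = 0 := by
  rw [chi_notMem' h2, chi_notMem' (by simpa using h1)]

lemma Fval1 {G : SimpleGraph V} {A : Set V} {v : V} (h : v ∉ closedNbhdSet G A) :
    2 * chi A v + chi (closedNbhdSet G A)ᶜ v = 1 := by
  rw [chi_notMem' (fun hv => h (subset_cns hv)), chi_mem' (by simpa using h)]

lemma Fval2_iff {G : SimpleGraph V} {A : Set V} {v : V} :
    2 * chi A v + chi (closedNbhdSet G A)ᶜ v = 2 ↔ v ∈ A := by
  constructor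
  · intro h
    by_contra hv
    by_cases hn : v ∈ closedNbhdSet G A
    · rw [Fval0 hn hv] at h; omega
    · rw [Fval1 hn] at h; omega
  · exact Fval2


/-- `F(A) = 2·χ_A + χ_{V∖N[A]}` is a bijection from the collection of sets
`A ⊆ V` such that every `v ∈ A` has a private neighbor other than itself in `G[N[A]]`
onto the set of minimal Roman dominating functions of `G`. -/
theorem stmt0 [Fintype V] (G : SimpleGraph V) :
    Set.BijOn (fun A : Set V => fun v => 2 * chi A v + chi (closedNbhdSet G A)ᶜ v)
      {A : Set V | ∀ v ∈ A, ¬ privNbhd G (closedNbhdSet G A) A v ⊆ {v}}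
      {f : V → ℕ | MinimalWrt (IsRDF G) f} := by
  classical
  refine ⟨?_, ?_, ?_⟩
  · -- MapsTo
    intro A hA
    simp only [mem_setOf_eq] at hA ⊢
    have hrdf : IsRDF G (fun v => 2 * chi A v + chi (closedNbhdSet G A)ᶜ v) := by
      constructor
      · intro v
        show 2 * chi A v + chi (closedNbhdSet G A)ᶜ v ≤ 2
        by_cases h : v ∈ A
        · rw [Fval2 h]
        · by_cases hn : v ∈ closedNbhdSet G A
          · rw [Fval0 hn h]; omega
          · rw [Fval1 hn]; omega
      · intro v hv
        replace hv : 2 * chi A v + chi (closedNbhdSet G A)ᶜ v = 0 := hv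
        have hvA : v ∉ A := fun h => by rw [Fval2 (G := G) h] at hv; omega
        have hvn : v ∈ closedNbhdSet G A := by
          by_contra h; rw [Fval1 h] at hv; omega
        obtain ⟨u, hu, heq⟩ := mem_cns.1 hvn
        rcases heq with rfl | hadj
        · exact absurd hu hvA
        · exact ⟨u, hadj, Fval2 hu⟩
    refine ⟨hrdf, ?_⟩
    intro g hg hle
    funext v
    show g v = 2 * chi A v + chi (closedNbhdSet G A)ᶜ v
    by_cases hv : v ∈ A
    · -- g v = 2
      rw [Fval2 hv]
      obtain ⟨u, hupriv, hune⟩ : ∃ u, u ∈ privNbhd G (closedNbhdSet G A) A v ∧ u ≠ v := by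
        by_contra h
        push_neg at h
        exact hA v hv (fun u hu => h u hu)
      obtain ⟨⟨huN, heq⟩, hnot⟩ := hupriv
      have hadj : G.Adj u v := heq.resolve_left hune
      have hpriv : ∀ w ∈ A, w ≠ v → u ≠ w ∧ ¬ G.Adj u w := by
        intro w hw hwv
        constructor
        · rintro rfl
          exact hnot (mem_cnsIn.2 ⟨u, ⟨hw, hwv⟩, huN, Or.inl rfl⟩)
        · intro hadj'
          exact hnot (mem_cnsIn.2 ⟨w, ⟨hw, hwv⟩, huN, Or.inr hadj'⟩)
      have huA : u ∉ A := by
        intro huA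
        exact (hpriv u huA hune).1 rfl
      have hFu : (2 * chi A u + chi (closedNbhdSet G A)ᶜ u) = 0 := Fval0 huN huA
      have hgu : g u = 0 := by
        have h1 : g u ≤ 2 * chi A u + chi (closedNbhdSet G A)ᶜ u := hle u
        omega
      obtain ⟨w, hadjw, hgw⟩ := hg.2 u hgu
      have h1 : g w ≤ 2 * chi A w + chi (closedNbhdSet G A)ᶜ w := hle w
      have h2 : 2 * chi A w + chi (closedNbhdSet G A)ᶜ w ≤ 2 := hrdf.1 w
      have hFw2 : (2 * chi A w + chi (closedNbhdSet G A)ᶜ w) = 2 := by omega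
      have hwA : w ∈ A := Fval2_iff.1 hFw2
      have hwv : w = v := by
        by_contra hne
        exact (hpriv w hwA hne).2 hadjw
      subst hwv
      have h3 : g w ≤ 2 := hg.1 w
      omega
    · by_cases hn : v ∈ closedNbhdSet G A
      · rw [Fval0 hn hv]
        have h1 : g v ≤ 2 * chi A v + chi (closedNbhdSet G A)ᶜ v := hle v
        rw [Fval0 (G := G) hn hv] at h1
        omega
      · rw [Fval1 hn]
        have h1 : g v ≤ 2 * chi A v + chi (closedNbhdSet G A)ᶜ v := hle v
        rw [Fval1 (G := G) hn] at h1
        rcases Nat.lt_or_ge (g v) 1 with h | h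
        · exfalso
          obtain ⟨u, hadj, hgu⟩ := hg.2 v (by omega)
          have h2 : g u ≤ 2 * chi A u + chi (closedNbhdSet G A)ᶜ u := hle u
          have h3 : 2 * chi A u + chi (closedNbhdSet G A)ᶜ u ≤ 2 := hrdf.1 u
          have hFu2 : (2 * chi A u + chi (closedNbhdSet G A)ᶜ u) = 2 := by omega
          exact hn (mem_cns.2 ⟨u, Fval2_iff.1 hFu2, Or.inr hadj⟩)
        · omega
  · -- InjOn
    intro A hA B hB h
    ext v
    constructor
    · intro hv
      have h2 : (2 * chi A v + chi (closedNbhdSet G A)ᶜ v)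
          = (2 * chi B v + chi (closedNbhdSet G B)ᶜ v) := congrFun h v
      exact Fval2_iff.1 (by rw [← h2]; exact Fval2 hv)
    · intro hv
      have h2 : (2 * chi A v + chi (closedNbhdSet G A)ᶜ v)
          = (2 * chi B v + chi (closedNbhdSet G B)ᶜ v) := congrFun h v
      exact Fval2_iff.1 (by rw [h2]; exact Fval2 hv)
  · -- SurjOn
    intro f hf
    simp only [mem_setOf_eq] at hf
    obtain ⟨⟨hbd, hdom⟩, hmin⟩ := hf
    set A : Set V := {v | f v = 2} with hAdef
    have h0 : ∀ v, f v = 0 → v ∈ closedNbhdSet G A := by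
      intro v hv
      obtain ⟨u, hadj, hu⟩ := hdom v hv
      exact mem_cns.2 ⟨u, hu, Or.inr hadj⟩
    have h1 : ∀ v, f v = 1 → v ∉ closedNbhdSet G A := by
      intro v hv hn
      set g : V → ℕ := fun w => if w = v then 0 else f w with hgdef
      have hgv : g v = 0 := by simp [hgdef]
      have hgrdf : IsRDF G g := by
        constructor
        · intro w
          by_cases h : w = v
          · simp [hgdef, h]
          · simp only [hgdef, if_neg h]; exact hbd w
        · intro w hw
          by_cases h : w = v
          · subst h
            obtain ⟨u, hu, heq⟩ := mem_cns.1 hn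
            have hu2 : f u = 2 := hu
            have huv : u ≠ w := by rintro rfl; omega
            rcases heq with rfl | hadj
            · exact absurd rfl huv
            · refine ⟨u, hadj, ?_⟩
              show (if u = w then 0 else f u) = 2
              rw [if_neg huv]
              exact hu2
          · simp only [hgdef, if_neg h] at hw
            obtain ⟨u, hadj, hu⟩ := hdom w hw
            have huv : u ≠ v := by rintro rfl; omega
            refine ⟨u, hadj, ?_⟩
            simp only [hgdef, if_neg huv]
            exact hu
      have hle : g ≤ f := by
        intro w
        by_cases h : w = v
        · subst h; simp [hgdef, hv]
        · simp [hgdef, if_neg h]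
      have := congrFun (hmin g hgrdf hle) v
      rw [hgv, hv] at this
      omega
    refine ⟨A, ?_, ?_⟩
    · -- A is in the domain set
      simp only [mem_setOf_eq]
      intro v hvA hsub
      have hfv : f v = 2 := hvA
      set g : V → ℕ := fun w => if w = v then 1 else f w with hgdef
      have hgrdf : IsRDF G g := by
        constructor
        · intro w
          by_cases h : w = v
          · simp [hgdef, h]
          · simp only [hgdef, if_neg h]; exact hbd w
        · intro w hw
          have hwv : w ≠ v := by
            intro h; subst h; simp [hgdef] at hw
          simp only [hgdef, if_neg hwv] at hw
          obtain ⟨u0, hadj0, hu0⟩ := hdom w hw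
          have hwN : w ∈ closedNbhdSet G A := h0 w hw
          by_cases hex : ∃ u, G.Adj w u ∧ f u = 2 ∧ u ≠ v
          · obtain ⟨u, hadj, hu, huv⟩ := hex
            exact ⟨u, hadj, by simp only [hgdef, if_neg huv]; exact hu⟩
          · exfalso
            push_neg at hex
            have hu0v : u0 = v := hex u0 hadj0 hu0
            subst hu0v
            have hwpriv : w ∈ privNbhd G (closedNbhdSet G A) A u0 := by
              refine ⟨⟨hwN, Or.inr hadj0⟩, ?_⟩
              intro hmem
              obtain ⟨u, ⟨huA, huv⟩, _, heq⟩ := mem_cnsIn.1 hmem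
              simp only [mem_singleton_iff] at huv
              have huA2 : f u = 2 := huA
              rcases heq with rfl | hadj
              · omega
              · exact huv (hex u hadj huA2)
            have := hsub hwpriv
            simp only [mem_singleton_iff] at this
            exact hwv this
      have hle : g ≤ f := by
        intro w
        by_cases h : w = v
        · subst h; simp [hgdef, hfv]
        · simp [hgdef, if_neg h]
      have := congrFun (hmin g hgrdf hle) v
      simp only [hgdef, if_pos rfl] at this
      omega
    · -- F A = f
      funext v
      show 2 * chi A v + chi (closedNbhdSet G A)ᶜ v = f v
      have hb := hbd v
      have hcase : f v = 0 ∨ f v = 1 ∨ f v = 2 := by omega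
      rcases hcase with h | h | h
      · rw [h]
        exact Fval0 (h0 v h) (by intro hv2; have : f v = 2 := hv2; omega)
      · rw [h]
        exact Fval1 (h1 v h)
      · rw [h]
        exact Fval2 (show f v = 2 from h)
end

section
/- Let 𝒫 be a nice Roman domination property, G=(V,E) a finite simple graph and A ⊆ B ⊆ V. If C_{𝒫,G}[B] ≠ ∅, then C_{𝒫,G}[A] ≠ ∅. -/
open Set

variable {V : Type*}

section AuxStmt1

lemma chi_self' (u : V) : chi ({u} : Set V) u = 1 := by simp [chi]

lemma chi_ne' {u v : V} (h : v ≠ u) : chi ({u} : Set V) v = 0 := by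
  simp [chi, Set.indicator_of_notMem, h]

lemma mem_privNbhd_iff' {G : SimpleGraph V} {W A : Set V} {v u : V} :
    u ∈ privNbhd G W A v ↔
      (u ∈ W ∧ (u = v ∨ G.Adj u v)) ∧ ∀ a ∈ A, a ≠ v → ¬(u = a ∨ G.Adj u a) := by
  simp only [privNbhd, closedNbhdIn, closedNbhdSetIn, mem_diff, mem_iUnion, exists_prop,
    mem_setOf_eq, mem_sep_iff, mem_diff, mem_singleton_iff, not_exists, not_and]
  constructor
  · rintro ⟨⟨hW, hv⟩, hn⟩
    exact ⟨⟨hW, hv⟩, fun a ha hav => hn a ⟨ha, hav⟩ hW⟩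
  · rintro ⟨⟨hW, hv⟩, hn⟩
    exact ⟨⟨hW, hv⟩, fun a ⟨ha, hav⟩ _ => hn a ha hav⟩

lemma exists_minimal_below' [Fintype V] {P : (V → ℕ) → Prop} {h : V → ℕ} (hh : P h) :
    ∃ g, MinimalWrt P g ∧ g ≤ h := by
  classical
  have hex : ∃ n, ∃ g, P g ∧ g ≤ h ∧ ∑ v, g v = n := ⟨_, h, hh, le_refl _, rfl⟩
  obtain ⟨g, hg, hgh, hsum⟩ := Nat.find_spec hex
  refine ⟨g, ⟨hg, ?_⟩, hgh⟩
  intro g' hg' hle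
  by_contra hne
  have h1 : Nat.find hex ≤ ∑ v, g' v := Nat.find_le ⟨g', hg', hle.trans hgh, rfl⟩
  have h2 : ∑ v, g' v < ∑ v, g v := by
    refine Finset.sum_lt_sum (fun i _ => hle i) ?_
    by_contra hc; push_neg at hc
    exact hne (funext fun v => le_antisymm (hle v) (hc v (Finset.mem_univ v)))
  omega

open scoped Classical in
/-- Termination measure for the step-by-step transformation. -/
noncomputable def bmeasure' [Fintype V] (A : Set V) (h : V → ℕ) : ℕ :=
  (Finset.univ.filter (fun v => h v = 2 ∧ v ∉ A)).card * (Fintype.card V + 1)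
    + (Finset.univ.filter (fun v => h v = 0)).card

lemma mem_Vlevel' {f : V → ℕ} {i : ℕ} {v : V} : v ∈ Vlevel f i ↔ f v = i := Iff.rfl

/-- Repeatedly raise private 0-neighbors and lower 2-values outside `A`, producing a
function with property `P` whose level-2 set is exactly `A`, and keeping the vertices
satisfying `Q` (private neighbors of `A`) at value 0. -/
lemma build' [Fintype V] (G : SimpleGraph V) (P : (V → ℕ) → Prop) (hP : IsNiceRDP G P)
    (A : Set V) (Q : V → Prop) (hQ : ∀ u, Q u → ∃ a ∈ A, G.Adj u a) :
    ∀ n (h : V → ℕ), bmeasure' A h ≤ n → P h → A ⊆ Vlevel h 2 →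
      (∀ u, Q u → h u = 0) →
      ∃ h', P h' ∧ Vlevel h' 2 = A ∧ ∀ u, Q u → h' u = 0 := by
  classical
  intro n
  induction n using Nat.strong_induction_on with
  | _ n IH =>
  intro h hm hPh hA hQh
  by_cases hV2 : Vlevel h 2 = A
  · exact ⟨h, hPh, hV2, hQh⟩
  have hns : ¬ Vlevel h 2 ⊆ A := fun hc => hV2 (Subset.antisymm hc hA)
  obtain ⟨v, hv2, hvA⟩ := Set.not_subset.mp hns
  have hv2' : h v = 2 := hv2
  by_cases hpriv : privNbhd G (Vlevel h 0 ∪ Vlevel h 2) (Vlevel h 2) v ⊆ {v}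
  · -- lower v from 2 to 1
    set h' := h - chi {v} with hh'
    have hPh' : P h' := (hP.2.2 h hPh v hv2).mpr hpriv
    have h'v : h' v = 1 := by
      simp only [hh', Pi.sub_apply, chi_self', hv2']
    have h'w : ∀ w, w ≠ v → h' w = h w := fun w hw => by
      simp only [hh', Pi.sub_apply, chi_ne' hw, Nat.sub_zero]
    have hV2' : Vlevel h' 2 = Vlevel h 2 \ {v} := by
      ext w
      by_cases hwv : w = v
      · subst hwv
        simp [mem_Vlevel', h'v]
      · simp [mem_Vlevel', h'w w hwv, hwv]
    have hA' : A ⊆ Vlevel h' 2 := by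
      rw [hV2']
      exact fun a ha => ⟨hA ha, fun he => hvA (mem_singleton_iff.mp he ▸ ha)⟩
    have hQ' : ∀ u, Q u → h' u = 0 := by
      intro u hu
      have hu0 := hQh u hu
      have huv : u ≠ v := fun he => by rw [he, hv2'] at hu0; exact two_ne_zero hu0
      rw [h'w u huv]; exact hu0
    have hm' : bmeasure' A h' < bmeasure' A h := by
      have hf0 : (Finset.univ.filter (fun w => h' w = 0)) =
          (Finset.univ.filter (fun w => h w = 0)) := by
        apply Finset.filter_congr
        intro w _
        by_cases hwv : w = v
        · subst hwv; simp [h'v, hv2']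
        · simp [h'w w hwv]
      have hf2 : (Finset.univ.filter (fun w => h' w = 2 ∧ w ∉ A)) =
          (Finset.univ.filter (fun w => h w = 2 ∧ w ∉ A)).erase v := by
        ext w
        simp only [Finset.mem_erase, Finset.mem_filter, Finset.mem_univ, true_and]
        by_cases hwv : w = v
        · subst hwv; simp [h'v]
        · simp [h'w w hwv, hwv]
      have hvmem : v ∈ (Finset.univ.filter (fun w => h w = 2 ∧ w ∉ A)) := by
        simp [hv2', hvA]
      have hlt : ((Finset.univ.filter (fun w => h w = 2 ∧ w ∉ A)).erase v).card <
          (Finset.univ.filter (fun w => h w = 2 ∧ w ∉ A)).card :=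
        Finset.card_erase_lt_of_mem hvmem
      unfold bmeasure'
      rw [hf0, hf2]
      nlinarith [Nat.succ_pos (Fintype.card V)]
    exact IH (bmeasure' A h') (lt_of_lt_of_le hm' hm) h' le_rfl hPh' hA' hQ'
  · -- raise some external private neighbor u of v from 0 to 1
    obtain ⟨u, hu, hune⟩ := Set.not_subset.mp hpriv
    rw [mem_singleton_iff] at hune
    obtain ⟨⟨huW, _⟩, hupriv⟩ := mem_privNbhd_iff'.mp hu
    have hu0 : h u = 0 := by
      rcases huW with h0 | h2
      · exact h0
      · exact absurd (Or.inl rfl) (hupriv u h2 hune)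
    have hnotQu : ¬ Q u := by
      intro hQu
      obtain ⟨a, haA, hadj⟩ := hQ u hQu
      have hav : a ≠ v := fun he => hvA (he ▸ haA)
      exact hupriv a (hA haA) hav (Or.inr hadj)
    set h' := h + chi {u} with hh'
    have hPh' : P h' := hP.2.1 h hPh u hu0
    have h'u : h' u = 1 := by
      simp only [hh', Pi.add_apply, chi_self', hu0]
    have h'w : ∀ w, w ≠ u → h' w = h w := fun w hw => by
      simp only [hh', Pi.add_apply, chi_ne' hw, Nat.add_zero]
    have hV2' : Vlevel h' 2 = Vlevel h 2 := by
      ext w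
      by_cases hwu : w = u
      · subst hwu; simp [mem_Vlevel', h'u, hu0]
      · simp [mem_Vlevel', h'w w hwu]
    have hA' : A ⊆ Vlevel h' 2 := hV2' ▸ hA
    have hQ' : ∀ w, Q w → h' w = 0 := by
      intro w hw
      have hwu : w ≠ u := fun he => hnotQu (he ▸ hw)
      rw [h'w w hwu]; exact hQh w hw
    have hm' : bmeasure' A h' < bmeasure' A h := by
      have hf2 : (Finset.univ.filter (fun w => h' w = 2 ∧ w ∉ A)) =
          (Finset.univ.filter (fun w => h w = 2 ∧ w ∉ A)) := by
        apply Finset.filter_congr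
        intro w _
        by_cases hwu : w = u
        · subst hwu; simp [h'u, hu0]
        · simp [h'w w hwu]
      have hf0 : (Finset.univ.filter (fun w => h' w = 0)) =
          (Finset.univ.filter (fun w => h w = 0)).erase u := by
        ext w
        simp only [Finset.mem_erase, Finset.mem_filter, Finset.mem_univ, true_and]
        by_cases hwu : w = u
        · subst hwu; simp [h'u]
        · simp [h'w w hwu, hwu]
      have humem : u ∈ (Finset.univ.filter (fun w => h w = 0)) := by simp [hu0]
      have hlt := Finset.card_erase_lt_of_mem humem
      unfold bmeasure'
      rw [hf0, hf2]
      omega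
    exact IH (bmeasure' A h') (lt_of_lt_of_le hm' hm) h' le_rfl hPh' hA' hQ'

end AuxStmt1

/-- for a nice Roman domination property, if `C_{P,G}[B]` is nonempty
and `A ⊆ B`, then `C_{P,G}[A]` is nonempty. -/
theorem stmt1 [Fintype V] (G : SimpleGraph V) (P : (V → ℕ) → Prop)
    (hP : IsNiceRDP G P) (A B : Set V) (hAB : A ⊆ B)
    (hB : (CSet P B).Nonempty) : (CSet P A).Nonempty := by
    classical
  obtain ⟨f, ⟨⟨hPf, hfmin⟩, hfB⟩⟩ := hB
  -- every vertex of B has an external private neighbor of value 0 w.r.t. f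
  have hpn : ∀ a ∈ B, ∃ u, f u = 0 ∧ G.Adj u a ∧
      ∀ b ∈ B, b ≠ a → ¬(u = b ∨ G.Adj u b) := by
    intro a haB
    have hfa : f a = 2 := by rw [← hfB] at haB; exact haB
    have hnP : ¬ P (f - chi {a}) := by
      intro hPa
      have hle : f - chi {a} ≤ f := fun w => by
        simp only [Pi.sub_apply]; omega
      have heq := hfmin _ hPa hle
      have := congrFun heq a
      simp only [Pi.sub_apply, chi_self', hfa] at this
      omega
    have hiff := hP.2.2 f hPf a (by rw [mem_Vlevel', hfa])
    have hnot : ¬ privNbhd G (Vlevel f 0 ∪ Vlevel f 2) (Vlevel f 2) a ⊆ {a} := by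
      intro hc; exact hnP (hiff.mpr hc)
    obtain ⟨u, hu, hune⟩ := Set.not_subset.mp hnot
    rw [mem_singleton_iff] at hune
    obtain ⟨⟨huW, huv⟩, hupriv⟩ := mem_privNbhd_iff'.mp hu
    rw [hfB] at hupriv
    have hu0 : f u = 0 := by
      rcases huW with h0 | h2
      · exact h0
      · rw [hfB] at h2
        exact absurd (Or.inl rfl) (hupriv u h2 hune)
    exact ⟨u, hu0, huv.resolve_left hune, hupriv⟩
  -- build h with property P, Vlevel 2 = A, preserving private neighbors of A at 0
  set Q : V → Prop := fun u => f u = 0 ∧ ∃ a ∈ A, G.Adj u a with hQdef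
  have hQ : ∀ u, Q u → ∃ a ∈ A, G.Adj u a := fun u hu => hu.2
  have hAf : A ⊆ Vlevel f 2 := by rw [hfB]; exact hAB
  obtain ⟨h, hPh, hhA, hQh⟩ := build' G P hP A Q hQ (bmeasure' A f) f le_rfl hPf hAf
    (fun u hu => hu.1)
  -- take a minimal function below h
  obtain ⟨g, hgmin, hgh⟩ := exists_minimal_below' hPh
  refine ⟨g, hgmin, ?_⟩
  have hgsubA : Vlevel g 2 ⊆ A := by
    intro w hw
    have hgw : g w = 2 := hw
    have hhw : h w = 2 := le_antisymm ((hP.1 h hPh).1 w) (hgw ▸ hgh w)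
    rw [← hhA]; exact hhw
  apply Subset.antisymm hgsubA
  intro a haA
  obtain ⟨u, hu0, hadj, hupriv⟩ := hpn a (hAB haA)
  have hhu : h u = 0 := hQh u ⟨hu0, a, haA, hadj⟩
  have hgu : g u = 0 := Nat.le_zero.mp (hhu ▸ hgh u)
  obtain ⟨w, hadjw, hw2⟩ := (hP.1 g hgmin.1).2 u hgu
  have hwA : w ∈ A := hgsubA hw2
  have hwa : w = a := by
    by_contra hne
    exact hupriv w (hAB hwA) hne (Or.inr hadjw)
  rw [mem_Vlevel', ← hwa]; exact hw2
end

section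
/- Let 𝒫 be a nice Roman domination property, G=(V,E) a finite simple graph and A ⊆ V. Then C_{𝒫,G}[A] ≠ ∅ if and only if there is a minimal function g : V → {0,1,2} with property 𝒫 on G such that 2·χ_A + χ_{V∖N[A]} ≤ g. Furthermore, every h ∈ C_{𝒫,G}[A] satisfies 2·χ_A + χ_{V∖N[A]} ≤ h. -/
open Set

variable {V : Type*}

lemma mem_closedNbhdSet' {G : SimpleGraph V} {A : Set V} {v : V} :
    v ∈ closedNbhdSet G A ↔ ∃ a ∈ A, v = a ∨ G.Adj v a := by
  simp [closedNbhdSet, closedNbhd]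

/-- The lower bound holds for any function with property `P` whose level-2 set is `A`. -/
lemma lb_of_P {G : SimpleGraph V} {P : (V → ℕ) → Prop} (hP : IsNiceRDP G P) {A : Set V}
    {h : V → ℕ} (hPh : P h) (hV2 : Vlevel h 2 = A) :
    (fun v => 2 * chi A v + chi (closedNbhdSet G A)ᶜ v) ≤ h := by
  have hRDF := hP.1 h hPh
  intro v
  by_cases hv : v ∈ A
  · have h2 : h v = 2 := by rw [← hV2] at hv; exact hv
    have hvN : v ∈ closedNbhdSet G A := mem_closedNbhdSet'.mpr ⟨v, hv, Or.inl rfl⟩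
    have : v ∉ (closedNbhdSet G A)ᶜ := fun h' => h' hvN
    simp [chi_mem' hv, chi_notMem' this, h2]
  · by_cases hvN : v ∈ closedNbhdSet G A
    · have : v ∉ (closedNbhdSet G A)ᶜ := fun h' => h' hvN
      simp [chi_notMem' hv, chi_notMem' this]
    · have hne : h v ≠ 0 := by
        intro h0
        obtain ⟨u, hadj, hu2⟩ := hRDF.2 v h0
        have huA : u ∈ A := by rw [← hV2]; exact hu2
        exact hvN (mem_closedNbhdSet'.mpr ⟨u, huA, Or.inr hadj⟩)
      have : chi (closedNbhdSet G A)ᶜ v = 1 := chi_mem' hvN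
      simp only [chi_notMem' hv, this]
      omega

/-- If `g` is minimal with property `P` and satisfies the lower bound, then `V_2(g) = A`. -/
lemma V2_eq_of_lb {G : SimpleGraph V} {P : (V → ℕ) → Prop} (hP : IsNiceRDP G P) {A : Set V}
    {g : V → ℕ} (hmin : MinimalWrt P g)
    (hle : (fun v => 2 * chi A v + chi (closedNbhdSet G A)ᶜ v) ≤ g) :
    Vlevel g 2 = A := by
  have hPg := hmin.1
  have hRDF := hP.1 g hPg
  have hsub : A ⊆ Vlevel g 2 := by
    intro a ha
    have h1 := hle a
    simp only [chi_mem' ha] at h1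
    have h2 := hRDF.1 a
    show g a = 2
    omega
  refine Set.Subset.antisymm ?_ hsub
  intro v hv2
  by_contra hvA
  have hgv : g v = 2 := hv2
  -- g - chi {v} does not have property P, by minimality
  have hnot : ¬ P (g - chi {v}) := by
    intro hp
    have hle' : g - chi {v} ≤ g := fun u => Nat.sub_le _ _
    have heq := hmin.2 _ hp hle'
    have := congrFun heq v
    simp [Pi.sub_apply, chi_mem' (Set.mem_singleton v), hgv] at this
  have hpriv : ¬ privNbhd G (Vlevel g 0 ∪ Vlevel g 2) (Vlevel g 2) v ⊆ {v} :=
    fun hs => hnot ((hP.2.2 g hPg v hv2).mpr hs)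
  obtain ⟨u, hu, huv⟩ := Set.not_subset.mp hpriv
  have huv : u ≠ v := huv
  obtain ⟨⟨huW, hueq⟩, hu2⟩ := hu
  have hadj : G.Adj u v := hueq.resolve_left huv
  -- u is not in V_2(g)
  have hu2' : u ∉ Vlevel g 2 := by
    intro h2
    exact hu2 (Set.mem_biUnion (⟨h2, huv⟩ : u ∈ Vlevel g 2 \ {v})
      ⟨Or.inr h2, Or.inl rfl⟩)
  have hu0 : g u = 0 := show u ∈ Vlevel g 0 from huW.resolve_right hu2'
  -- u is not in N[A]
  have huN : u ∉ closedNbhdSet G A := by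
    intro hN
    obtain ⟨a, haA, hcase⟩ := mem_closedNbhdSet'.mp hN
    have ha2 : a ∈ Vlevel g 2 := hsub haA
    have hav : a ≠ v := fun h => hvA (h ▸ haA)
    rcases hcase with rfl | hadj'
    · exact absurd hu0 (by rw [show g u = 2 from ha2]; omega)
    · exact hu2 (Set.mem_biUnion (⟨ha2, hav⟩ : a ∈ Vlevel g 2 \ {v})
        ⟨huW, Or.inr hadj'⟩)
  have huA : u ∉ A := fun h => by
    have : g u = 2 := hsub h
    omega
  have h1 := hle u
  have hchiA : chi A u = 0 := chi_notMem' huA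
  have hchiN : chi (closedNbhdSet G A)ᶜ u = 1 := chi_mem' huN
  simp only [hchiA, hchiN] at h1
  omega

/-- `C_{P,G}[A] ≠ ∅` iff there is a minimal function `g` with property `P`
with `2·χ_A + χ_{V∖N[A]} ≤ g`; moreover every `h ∈ C_{P,G}[A]` satisfies
`2·χ_A + χ_{V∖N[A]} ≤ h`. -/
theorem stmt2 [Fintype V] (G : SimpleGraph V) (P : (V → ℕ) → Prop)
    (hP : IsNiceRDP G P) (A : Set V) :
    ((CSet P A).Nonempty ↔
      ∃ g : V → ℕ, MinimalWrt P g ∧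
        (fun v => 2 * chi A v + chi (closedNbhdSet G A)ᶜ v) ≤ g) ∧
    (∀ h ∈ CSet P A, (fun v => 2 * chi A v + chi (closedNbhdSet G A)ᶜ v) ≤ h) := by
  constructor
  · constructor
    · rintro ⟨h, hmin, hV2⟩
      exact ⟨h, hmin, lb_of_P hP hmin.1 hV2⟩
    · rintro ⟨g, hmin, hle⟩
      exact ⟨g, hmin, V2_eq_of_lb hP hmin hle⟩
  · rintro h ⟨hmin, hV2⟩
    exact lb_of_P hP hmin.1 hV2
end

section
/- Let 𝒫 be a nice Roman domination property, G=(V,E) a finite simple graph and f : V → {0,1,2} a function with N(V_1(f)) ∩ V_2(f) = ∅. Then there exists a minimal function h : V → {0,1,2} with property 𝒫 on G satisfying f ≤ h if and only if C_{𝒫,G}[V_2(f)] ≠ ∅. -/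
open Set

variable {V : Type*}

/-!
If `h` is minimal with `f ≤ h`, then every vertex of `V₂(h)` has a private neighbour other than
itself, and `V₂(f) ⊆ V₂(h)`. Using only conditions (2) and (3), `h` is modified to a function with
property `P` whose `2`s are exactly `V₂(f)` and whose `2`s still have such private neighbours;
any minimal function below it must keep all these `2`s, so it lies in `C[V₂(f)]`. Conversely,
an Rdf `g` with `V₂(g) = V₂(f)` dominates `f` because no `1` of `f` is adjacent to a `2`.
-/

open Classical in
lemma chi_apply (S : Set V) (v : V) : chi S v = if v ∈ S then 1 else 0 := by
  simp [chi, Set.indicator_apply]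

@[simp]
lemma chi_empty : chi (∅ : Set V) = 0 :=
  indicator_empty _

lemma chi_insert {a : V} {s : Set V} (ha : a ∉ s) : chi (insert a s) = chi s + chi {a} := by
  classical
  funext u
  by_cases hu : u = a
  · subst hu; simp [chi_apply, ha]
  · simp [chi_apply, hu]

lemma mem_privNbhd {G : SimpleGraph V} {W A : Set V} {u v : V} :
    u ∈ privNbhd G W A v ↔
      u ∈ W ∧ (u = v ∨ G.Adj u v) ∧ ∀ x ∈ A, x ≠ v → u ≠ x ∧ ¬ G.Adj u x := by
  simp only [privNbhd, closedNbhdSetIn, closedNbhdIn, mem_sdiff, mem_iUnion₂, mem_ofPred_eq,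
    mem_singleton_iff, not_exists, not_and, not_or]
  aesop

lemma mem_privNbhd_of_subset {G : SimpleGraph V} {W W' A A' : Set V} {u v : V}
    (hu : u ∈ privNbhd G W A v) (huW' : u ∈ W') (hA : A' ⊆ A) : u ∈ privNbhd G W' A' v := by
  rw [mem_privNbhd] at hu ⊢
  exact ⟨huW', hu.2.1, fun x hx => hu.2.2 x (hA hx)⟩

lemma notMem_of_mem_privNbhd {G : SimpleGraph V} {W A : Set V} {u v : V}
    (hu : u ∈ privNbhd G W A v) (huv : u ≠ v) : u ∉ A :=
  fun huA => ((mem_privNbhd.mp hu).2.2 u huA huv).1 rfl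

/-- By condition (3), a `2` of `h` can be lowered to `1` exactly when it has no such neighbour. -/
def HasPrivateNeighbor (G : SimpleGraph V) (h : V → ℕ) (v : V) : Prop :=
  ∃ u ∈ privNbhd G (Vlevel h 0 ∪ Vlevel h 2) (Vlevel h 2) v, u ≠ v

lemma hasPrivateNeighbor_iff {G : SimpleGraph V} {h : V → ℕ} {v : V} :
    HasPrivateNeighbor G h v ↔ ¬ privNbhd G (Vlevel h 0 ∪ Vlevel h 2) (Vlevel h 2) v ⊆ {v} := by
  simp [HasPrivateNeighbor]

section Vlevel

variable {g : V → ℕ} {S : Set V}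

lemma vlevel_add_chi_zero (hS : S ⊆ Vlevel g 0) : Vlevel (g + chi S) 0 = Vlevel g 0 \ S := by
  classical
  ext u
  have := @hS u
  simp only [Vlevel, chi_apply, Pi.add_apply, mem_ofPred_eq, mem_sdiff] at this ⊢
  split_ifs <;> simp_all

lemma vlevel_add_chi_two (hS : S ⊆ Vlevel g 0) : Vlevel (g + chi S) 2 = Vlevel g 2 := by
  classical
  ext u
  have := @hS u
  simp only [Vlevel, chi_apply, Pi.add_apply, mem_ofPred_eq] at this ⊢
  split_ifs <;> simp_all

lemma vlevel_sub_chi_zero (hS : S ⊆ Vlevel g 2) : Vlevel (g - chi S) 0 = Vlevel g 0 := by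
  classical
  ext u
  have := @hS u
  simp only [Vlevel, chi_apply, Pi.sub_apply, mem_ofPred_eq] at this ⊢
  split_ifs <;> simp_all

lemma vlevel_sub_chi_two (hS : S ⊆ Vlevel g 2) : Vlevel (g - chi S) 2 = Vlevel g 2 \ S := by
  classical
  ext u
  have := @hS u
  simp only [Vlevel, chi_apply, Pi.sub_apply, mem_ofPred_eq, mem_sdiff] at this ⊢
  split_ifs <;> simp_all

end Vlevel

section Rdf

variable {G : SimpleGraph V}

/-- The private neighbour `u ≠ v` has value `0` under `h`, hence under `g`, and only `v` can
dominate it. -/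
theorem IsRDF.eq_two_of_le {g h : V → ℕ} (hg : IsRDF G g) (hh : IsRDF G h) (hgh : g ≤ h)
    {v : V} (hv : HasPrivateNeighbor G h v) : g v = 2 := by
  obtain ⟨u, hu, huv⟩ := hv
  have hu0 : h u = 0 := (mem_privNbhd.mp hu).1.resolve_right (notMem_of_mem_privNbhd hu huv)
  obtain ⟨w, huw, hw⟩ := hg.2 u (Nat.eq_zero_of_le_zero (hu0 ▸ hgh u))
  have hhw : h w = 2 := le_antisymm (hh.1 w) (hw ▸ hgh w)
  obtain rfl : w = v := by_contra fun hwv => ((mem_privNbhd.mp hu).2.2 w hhw hwv).2 huw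
  exact hw

theorem IsRDF.le_of_vlevel_two_eq {f g : V → ℕ} (hg : IsRDF G g) (hf : ∀ v, f v ≤ 2)
    (hsep : openNbhdSet G (Vlevel f 1) ∩ Vlevel f 2 = ∅) (h2 : Vlevel g 2 = Vlevel f 2) :
    f ≤ g := by
  intro v
  show f v ≤ g v
  by_cases hfv : f v = 2
  · have hgv : v ∈ Vlevel g 2 := h2 ▸ hfv
    exact hfv.trans_le hgv.ge
  have hfv' := hf v
  by_contra hlt
  obtain ⟨u, hvu, hu⟩ := hg.2 v (by omega)
  have hf1 : f v = 1 := by omega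
  exact eq_empty_iff_forall_notMem.mp hsep u ⟨mem_iUnion₂.mpr ⟨v, hf1, hvu⟩, h2 ▸ hu⟩

end Rdf

theorem exists_minimalWrt_le [Finite V] {P : (V → ℕ) → Prop} {h : V → ℕ} (hh : P h) :
    ∃ g, MinimalWrt P g ∧ g ≤ h := by
  have := Fintype.ofFinite V
  classical
  have hfin : {g | P g ∧ g ≤ h}.Finite :=
    (finite_Icc 0 h).subset fun g hg => ⟨fun _ => Nat.zero_le _, hg.2⟩
  obtain ⟨g, hg, hmin⟩ := hfin.exists_minimalFor id _ ⟨h, hh, le_rfl⟩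
  exact ⟨g, ⟨hg.1, fun k hk hkg => le_antisymm hkg (hmin ⟨hk, hkg.trans hg.2⟩ hkg)⟩, hg.2⟩

namespace IsNiceRDP

variable {G : SimpleGraph V} {P : (V → ℕ) → Prop}

theorem isRDF (hP : IsNiceRDP G P) {f : V → ℕ} (hf : P f) : IsRDF G f := hP.1 f hf

theorem add_chi [Finite V] (hP : IsNiceRDP G P) {g : V → ℕ} (hg : P g) {S : Set V}
    (hS : S ⊆ Vlevel g 0) : P (g + chi S) := by
  refine Set.Finite.induction_on_subset (motive := fun s _ => P (g + chi s)) S S.toFinite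
    (by rwa [chi_empty, add_zero]) fun {a s} haS hsS has ih => ?_
  rw [chi_insert has, ← add_assoc]
  refine hP.2.1 _ ih a ?_
  rw [vlevel_add_chi_zero (hsS.trans hS)]
  exact ⟨hS haS, has⟩

/-- Lowering a set `B` of `2`s to `1`s preserves a nice property as long as every `0` stays
dominated by a `2` outside `B`: then each vertex of `B` has no private neighbour but itself. -/
theorem sub_chi [Finite V] (hP : IsNiceRDP G P) {g : V → ℕ} (hg : P g) {B : Set V}
    (hB : B ⊆ Vlevel g 2) (hdom : ∀ u ∈ Vlevel g 0, ∃ a ∈ Vlevel g 2 \ B, G.Adj u a) :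
    P (g - chi B) := by
  refine Set.Finite.induction_on_subset (motive := fun s _ => P (g - chi s)) B B.toFinite
    (by rwa [chi_empty, tsub_zero]) fun {a s} haB hsB has ih => ?_
  have hs2 := hsB.trans hB
  rw [chi_insert has, tsub_add_eq_tsub_tsub]
  have ha : a ∈ Vlevel (g - chi s) 2 := by
    rw [vlevel_sub_chi_two hs2]
    exact ⟨hB haB, has⟩
  refine (hP.2.2 _ ih a ha).mpr fun u hu => by_contra fun hua => ?_
  rw [mem_singleton_iff] at hua
  have hu0 : u ∈ Vlevel g 0 := by
    have huW := (mem_privNbhd.mp hu).1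
    rw [vlevel_sub_chi_zero hs2] at huW
    exact huW.resolve_right (notMem_of_mem_privNbhd hu hua)
  obtain ⟨x, ⟨hx2, hxB⟩, hux⟩ := hdom u hu0
  refine ((mem_privNbhd.mp hu).2.2 x ?_ ?_).2 hux
  · rw [vlevel_sub_chi_two hs2]
    exact ⟨hx2, fun hxs => hxB (hsB hxs)⟩
  · rintro rfl
    exact hxB haB

theorem hasPrivateNeighbor_of_minimalWrt (hP : IsNiceRDP G P) {h : V → ℕ} (hh : MinimalWrt P h)
    {v : V} (hv : v ∈ Vlevel h 2) : HasPrivateNeighbor G h v := by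
  classical
  rw [hasPrivateNeighbor_iff]
  intro hsub
  have hlow := congrFun (hh.2 _ ((hP.2.2 h hh.1 v hv).mpr hsub) tsub_le_self) v
  have hv2 : h v = 2 := hv
  simp [chi_apply, hv2] at hlow

/-- To reach `V₂ = A`, first raise to `1` every `0` with no neighbour in `A`; afterwards each `0`
is dominated from `A`, so the `2`s outside `A` can be lowered, and private neighbours of vertices
of `A` survive both moves. -/
theorem exists_vlevel_two_eq [Finite V] (hP : IsNiceRDP G P) {h : V → ℕ} (hh : P h) {A : Set V}
    (hA : A ⊆ Vlevel h 2) (hpriv : ∀ w ∈ A, HasPrivateNeighbor G h w) :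
    ∃ h', P h' ∧ Vlevel h' 2 = A ∧ ∀ w ∈ A, HasPrivateNeighbor G h' w := by
  set S := {u ∈ Vlevel h 0 | ∀ a ∈ A, ¬ G.Adj u a}
  have hS : S ⊆ Vlevel h 0 := fun u hu => hu.1
  have hB : Vlevel h 2 \ A ⊆ Vlevel (h + chi S) 2 := by
    rw [vlevel_add_chi_two hS]
    exact sdiff_subset
  refine ⟨h + chi S - chi (Vlevel h 2 \ A), hP.sub_chi (hP.add_chi hh hS) hB ?_, ?_, ?_⟩
  · intro u hu
    rw [vlevel_add_chi_zero hS] at hu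
    obtain ⟨a, haA, hua⟩ : ∃ a ∈ A, G.Adj u a := by
      by_contra! hnadj
      exact hu.2 ⟨hu.1, hnadj⟩
    rw [vlevel_add_chi_two hS]
    exact ⟨a, ⟨hA haA, fun ha => ha.2 haA⟩, hua⟩
  · rw [vlevel_sub_chi_two hB, vlevel_add_chi_two hS, sdiff_sdiff_cancel_left hA]
  · intro w hw
    obtain ⟨u, hu, huw⟩ := hpriv w hw
    have hu0 : u ∈ Vlevel h 0 :=
      (mem_privNbhd.mp hu).1.resolve_right (notMem_of_mem_privNbhd hu huw)
    have huS : u ∉ S := fun huS => huS.2 w hw ((mem_privNbhd.mp hu).2.1.resolve_left huw)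
    refine ⟨u, mem_privNbhd_of_subset hu (Or.inl ?_) ?_, huw⟩
    · rw [vlevel_sub_chi_zero hB, vlevel_add_chi_zero hS]
      exact ⟨hu0, huS⟩
    · rw [vlevel_sub_chi_two hB, vlevel_add_chi_two hS]
      exact sdiff_subset

theorem cSet_nonempty [Finite V] (hP : IsNiceRDP G P) {h : V → ℕ} (hh : P h)
    (hpriv : ∀ w ∈ Vlevel h 2, HasPrivateNeighbor G h w) : (CSet P (Vlevel h 2)).Nonempty := by
  obtain ⟨g, hg, hgh⟩ := exists_minimalWrt_le hh
  refine ⟨g, hg, Subset.antisymm (fun v hv => ?_) fun v hv =>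
    (hP.isRDF hg.1).eq_two_of_le (hP.isRDF hh) hgh (hpriv v hv)⟩
  have hgv : g v = 2 := hv
  exact le_antisymm ((hP.isRDF hh).1 v) (hgv ▸ hgh v)

end IsNiceRDP

/-- if `N(V_1(f)) ∩ V_2(f) = ∅`, then there is a minimal function `h` with
property `P` with `f ≤ h` iff `C_{P,G}[V_2(f)] ≠ ∅`. -/
theorem stmt3 [Fintype V] (G : SimpleGraph V) (P : (V → ℕ) → Prop)
    (hP : IsNiceRDP G P) (f : V → ℕ) (hf : ∀ v, f v ≤ 2)
    (hsep : openNbhdSet G (Vlevel f 1) ∩ Vlevel f 2 = ∅) :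
    (∃ h : V → ℕ, MinimalWrt P h ∧ f ≤ h) ↔ (CSet P (Vlevel f 2)).Nonempty := by
  constructor
  · rintro ⟨h, hh, hfh⟩
    have hA : Vlevel f 2 ⊆ Vlevel h 2 := fun v (hv : f v = 2) =>
      le_antisymm ((hP.isRDF hh.1).1 v) (hv ▸ hfh v)
    obtain ⟨h', hh', h'2, hpriv⟩ := hP.exists_vlevel_two_eq hh.1 hA
      fun w hw => hP.hasPrivateNeighbor_of_minimalWrt hh (hA hw)
    exact h'2 ▸ hP.cSet_nonempty hh' (h'2 ▸ hpriv)
  · rintro ⟨g, hg, hg2⟩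
    exact ⟨g, hg, (hP.isRDF hg.1).le_of_vlevel_two_eq hf hsep hg2⟩
end

section
/- Let G=(V,E) be a finite simple graph and f : V → {0,1,2} a minimal maximal Roman dominating function on G. Then ∅ ≠ V ∖ N[V_0(f)] ⊆ V_1(f). -/
open Set

variable {V : Type*}

/-- for a minimal maximal Roman dominating function `f`,
`∅ ≠ V ∖ N[V_0(f)] ⊆ V_1(f)`. -/
theorem stmt5 [Fintype V] (G : SimpleGraph V) (f : V → ℕ)
    (hf : MinimalWrt (IsMRDF G) f) :
    (closedNbhdSet G (Vlevel f 0))ᶜ.Nonempty ∧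
    (closedNbhdSet G (Vlevel f 0))ᶜ ⊆ Vlevel f 1 := by
  classical
  obtain ⟨⟨⟨hle, hrdf⟩, hnd⟩, hmin⟩ := hf
  refine ⟨Set.nonempty_compl.mpr hnd, ?_⟩
  intro v hv
  simp only [Set.mem_compl_iff, closedNbhdSet, Set.mem_iUnion, closedNbhd,
    Set.mem_setOf_eq, not_exists] at hv
  have h0 : f v ≠ 0 := by
    intro h
    exact hv v h (Or.inl rfl)
  have h2 : f v ≠ 2 := by
    intro h
    set g : V → ℕ := Function.update f v 1 with hg
    have hgv : g v = 1 := Function.update_self v 1 f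
    have hgne : ∀ u, u ≠ v → g u = f u := fun u hu => Function.update_of_ne hu 1 f
    have hV0 : Vlevel g 0 = Vlevel f 0 := by
      ext u
      simp only [Vlevel, Set.mem_setOf_eq]
      by_cases huv : u = v
      · subst huv
        rw [hgv, h]; omega
      · rw [hgne u huv]
    have hgmrdf : IsMRDF G g := by
      refine ⟨⟨fun u => ?_, fun u hu => ?_⟩, hV0 ▸ hnd⟩
      · by_cases huv : u = v
        · subst huv; rw [hgv]; omega
        · rw [hgne u huv]; exact hle u
      · have huv : u ≠ v := by
          intro h'; subst h'; rw [hgv] at hu; omega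
        rw [hgne u huv] at hu
        obtain ⟨w, hw, hw2⟩ := hrdf u hu
        have hwv : w ≠ v := by
          intro h'; subst h'
          exact hv u hu (Or.inr hw.symm)
        exact ⟨w, hw, by rw [hgne w hwv]; exact hw2⟩
    have hgle : g ≤ f := by
      intro u
      by_cases huv : u = v
      · subst huv; rw [hgv, h]; exact one_le_two
      · exact le_of_eq (hgne u huv)
    have := hmin g hgmrdf hgle
    have : g v = f v := congrFun this v
    rw [hgv, h] at this; omega
  have := hle v
  show f v = 1
  omega
end

section
/- Let G=(V,E) be a finite simple graph of order n and A ⊆ V. Then the number of minimal maximal Roman dominating functions f on G with V_2(f) = A is at most n, i.e. |C_{ℳℛ𝒟ℱ,G}[A]| ≤ n. -/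
open Set

variable {V : Type*}

open Classical in
/-- Canonical function determined by `A` and a witness vertex `w`. -/
noncomputable def Fcanon (G : SimpleGraph V) (A : Set V) (w : V) : V → ℕ :=
  fun v => if v ∈ A then 2 else
    if (∃ u, G.Adj v u ∧ u ∈ A) ∧ v ≠ w ∧ ¬ G.Adj v w then 0 else 1

lemma key_lemma (G : SimpleGraph V) (A : Set V) {f : V → ℕ}
    (hf : f ∈ CSet (IsMRDF G) A) {w : V} (hw : w ∉ closedNbhdSet G (Vlevel f 0)) :
    f = Fcanon G A w := by
  classical
  obtain ⟨⟨⟨⟨hle, hrdf⟩, _hmax⟩, hmin⟩, hV2⟩ := hf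
  funext v
  unfold Fcanon
  by_cases hvA : v ∈ A
  · rw [if_pos hvA]
    exact (hV2 ▸ hvA : v ∈ Vlevel f 2)
  · rw [if_neg hvA]
    have hv2 : f v ≠ 2 := fun h => hvA (hV2 ▸ (h : v ∈ Vlevel f 2))
    have hv01 : f v = 0 ∨ f v = 1 := by have := hle v; omega
    rcases hv01 with h0 | h1
    · rw [h0, if_pos]
      refine ⟨?_, ?_, ?_⟩
      · obtain ⟨u, hadj, hu2⟩ := hrdf v h0
        exact ⟨u, hadj, hV2 ▸ (hu2 : u ∈ Vlevel f 2)⟩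
      · rintro rfl
        exact hw (Set.mem_biUnion (h0 : v ∈ Vlevel f 0) (Or.inl rfl))
      · intro hadj
        exact hw (Set.mem_biUnion (h0 : v ∈ Vlevel f 0) (Or.inr hadj.symm))
    · rw [h1, if_neg]
      rintro ⟨⟨u, hadj, huA⟩, hvw, hnadj⟩
      set g : V → ℕ := Function.update f v 0 with hgdef
      have hgle : g ≤ f := by
        intro x
        by_cases hx : x = v
        · subst hx; simp [hgdef]
        · simp [hgdef, Function.update_of_ne hx]
      have hgne : g ≠ f := by
        intro h
        have : g v = f v := congrFun h v
        simp [hgdef, h1] at this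
      have hgrdf : IsRDF G g := by
        constructor
        · intro x; exact le_trans (hgle x) (hle x)
        · intro x hx
          by_cases hxv : x = v
          · refine ⟨u, hxv ▸ hadj, ?_⟩
            have huv : u ≠ v := fun h => hvA (h ▸ huA)
            have h2 : f u = 2 := (hV2.symm ▸ huA : u ∈ Vlevel f 2)
            show g u = 2
            simp [hgdef, Function.update_of_ne huv, h2]
          · have hfx : f x = 0 := by simpa [hgdef, Vlevel, Function.update_of_ne hxv] using hx
            obtain ⟨u', hadj', hu'⟩ := hrdf x hfx
            have hu'A : u' ∈ A := hV2 ▸ (hu' : u' ∈ Vlevel f 2)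
            have hu'v : u' ≠ v := fun h => hvA (h ▸ hu'A)
            refine ⟨u', hadj', ?_⟩
            show g u' = 2
            have h2 : f u' = 2 := hu'
            simp [hgdef, Function.update_of_ne hu'v, h2]
      have hguniv : closedNbhdSet G (Vlevel g 0) = Set.univ := by
        by_contra hne
        exact hgne (hmin g ⟨hgrdf, hne⟩ hgle)
      have hwmem : w ∈ closedNbhdSet G (Vlevel g 0) := hguniv ▸ Set.mem_univ w
      obtain ⟨x, hx0, hwx⟩ := Set.mem_iUnion₂.mp hwmem
      by_cases hxv : x = v
      · rw [hxv] at hwx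
        rcases hwx with h | hadjwx
        · exact hvw h.symm
        · exact hnadj hadjwx.symm
      · have hfx : f x = 0 := by
          simpa [hgdef, Vlevel, Function.update_of_ne hxv] using hx0
        exact hw (Set.mem_biUnion (hfx : x ∈ Vlevel f 0) hwx)

/-- the number of minimal maximal Roman dominating functions `f` on `G`
with `V_2(f) = A` is at most `n`. -/
theorem stmt7 [Fintype V] (G : SimpleGraph V) (A : Set V) :
    (CSet (IsMRDF G) A).ncard ≤ Fintype.card V := by
  classical
  by_cases hne : (CSet (IsMRDF G) A).Nonempty
  · obtain ⟨f0, hf0⟩ := hne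
    have hVne : Nonempty V := by
      by_contra h
      apply hf0.1.1.2
      ext x
      exact absurd ⟨x⟩ h
    set Φ : (V → ℕ) → V := fun f =>
      if hf : ((closedNbhdSet G (Vlevel f 0))ᶜ).Nonempty then hf.choose
      else Classical.arbitrary V with hΦdef
    have hΦ : ∀ f ∈ CSet (IsMRDF G) A, Φ f ∉ closedNbhdSet G (Vlevel f 0) := by
      intro f hf
      have hne' : ((closedNbhdSet G (Vlevel f 0))ᶜ).Nonempty := by
        rw [Set.nonempty_compl]
        exact hf.1.1.2
      simp only [hΦdef, dif_pos hne']
      exact hne'.choose_spec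
    have hinj : Set.InjOn Φ (CSet (IsMRDF G) A) := by
      intro f hf g hg h
      rw [key_lemma G A hf (hΦ f hf), key_lemma G A hg (hΦ g hg), h]
    have := Set.ncard_le_ncard_of_injOn Φ (fun a _ => Set.mem_univ (Φ a)) hinj Set.finite_univ
    simpa [Set.ncard_univ] using this
  · rw [Set.not_nonempty_iff_eq_empty.mp hne]
    simp
end

section
/- Let G=(V,E) be a finite simple graph and f : V → {0,1,2}. Then f is a minimal connected Roman dominating function if and only if the following three conditions hold: (1) f is a connected Roman dominating function; (2) for all v ∈ V_1(f), either N(v) ∩ V_2(f) = ∅ or the induced subgraph G[(V_1(f) ∪ V_2(f)) ∖ {v}] is not connected; (3) for all v ∈ V_2(f), P_{G[V_0(f) ∪ V_2(f)], V_2(f)}(v) ⊈ {v}. -/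
open Set

variable {V : Type*}

lemma conn_aux {G : SimpleGraph V} {S T : Set V} (hST : S ⊆ T)
    (hS : (G.induce S).Connected)
    (hdom : ∀ t ∈ T, t ∈ S ∨ ∃ s ∈ S, G.Adj t s) :
    (G.induce T).Connected := by
  have key : ∀ (x : T), ∃ s : S, (G.induce T).Reachable x ⟨s.1, hST s.2⟩ := by
    intro x
    rcases hdom x.1 x.2 with hx | ⟨s, hs, hadj⟩
    · exact ⟨⟨x.1, hx⟩, SimpleGraph.Reachable.refl _⟩
    · exact ⟨⟨s, hs⟩, SimpleGraph.Adj.reachable (by simpa using hadj)⟩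
  rw [SimpleGraph.connected_iff]
  refine ⟨?_, ?_⟩
  · intro u w
    obtain ⟨su, hu⟩ := key u
    obtain ⟨sw, hw⟩ := key w
    have h1 : (G.induce S).Reachable su sw := hS.preconnected su sw
    have h2 : (G.induce T).Reachable ⟨su.1, hST su.2⟩ ⟨sw.1, hST sw.2⟩ :=
      h1.map (⟨fun a => ⟨a.1, hST a.2⟩, fun {a b} h => h⟩ : G.induce S →g G.induce T)
    exact hu.trans (h2.trans hw.symm)
  · obtain ⟨⟨s, hs⟩⟩ := hS.nonempty
    exact ⟨⟨s, hST hs⟩⟩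

/-- characterization of minimal connected Roman dominating functions. -/
theorem stmt9 [Fintype V] (G : SimpleGraph V) (f : V → ℕ) (hf : ∀ v, f v ≤ 2) :
    MinimalWrt (IsCRDF G) f ↔
      (IsCRDF G f ∧
       (∀ v ∈ Vlevel f 1,
          G.neighborSet v ∩ Vlevel f 2 = ∅ ∨
          ¬ (G.induce ((Vlevel f 1 ∪ Vlevel f 2) \ {v})).Connected) ∧
       (∀ v ∈ Vlevel f 2,
          ¬ privNbhd G (Vlevel f 0 ∪ Vlevel f 2) (Vlevel f 2) v ⊆ {v})) := by
  classical
  constructor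
  · rintro ⟨hC, hmin⟩
    refine ⟨hC, ?_, ?_⟩
    · -- V1 condition
      intro v hv1
      have hv1' : f v = 1 := hv1
      by_contra hcon
      push_neg at hcon
      obtain ⟨hNne, hTconn⟩ := hcon
      set g : V → ℕ := fun u => if u = v then 0 else f u with hgdef
      have hglef : g ≤ f := by
        intro u; by_cases h : u = v <;> simp [hgdef, h]
      have hgRdf : IsRDF G g := by
        refine ⟨fun u => le_trans (hglef u) (hf u), ?_⟩
        intro u hu
        by_cases h : u = v
        · obtain ⟨w, hwadj, hw2⟩ := hNne
          have hwv : w ≠ v := fun e => G.irrefl (e ▸ hwadj)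
          refine ⟨w, by rw [h]; exact hwadj, by simp [hgdef, hwv]; exact hw2⟩
        · have hfu : f u = 0 := by simpa [hgdef, h] using hu
          obtain ⟨w, hwadj, hw2⟩ := hC.1.2 u hfu
          have hwv : w ≠ v := by rintro rfl; rw [hv1'] at hw2; exact absurd hw2 (by norm_num)
          exact ⟨w, hwadj, by simp [hgdef, hwv]; exact hw2⟩
      have hlev : Vlevel g 1 ∪ Vlevel g 2 = (Vlevel f 1 ∪ Vlevel f 2) \ {v} := by
        ext u
        by_cases h : u = v
        · subst h; simp [Vlevel, hgdef]
        · simp [Vlevel, hgdef, h]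
      have hgC : IsCRDF G g := ⟨hgRdf, by rw [hlev]; exact hTconn⟩
      have heq := hmin g hgC hglef
      have : g v = f v := congrFun heq v
      simp [hgdef, hv1'] at this
    · -- V2 condition
      intro v hv2
      have hv2' : f v = 2 := hv2
      intro hsub
      set g : V → ℕ := fun u => if u = v then 1 else f u with hgdef
      have hglef : g ≤ f := by
        intro u; by_cases h : u = v <;> simp [hgdef, h, hv2']
      have hgRdf : IsRDF G g := by
        refine ⟨fun u => le_trans (hglef u) (hf u), ?_⟩
        intro u hu
        have huv : u ≠ v := by
          intro h; rw [h] at hu; simp [hgdef] at hu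
        have hfu : f u = 0 := by simpa [hgdef, huv] using hu
        obtain ⟨w, hwadj, hw2⟩ := hC.1.2 u hfu
        by_cases hwv : w = v
        · subst hwv
          have hmemA : u ∈ closedNbhdIn G (Vlevel f 0 ∪ Vlevel f 2) w :=
            ⟨Or.inl hfu, Or.inr hwadj⟩
          have hnpriv : u ∉ privNbhd G (Vlevel f 0 ∪ Vlevel f 2) (Vlevel f 2) w := by
            intro hp
            have huw : u = w := hsub hp
            rw [huw, hw2] at hfu; exact absurd hfu (by norm_num)
          have hmemB : u ∈ closedNbhdSetIn G (Vlevel f 0 ∪ Vlevel f 2) (Vlevel f 2 \ {w}) := by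
            by_contra hB
            exact hnpriv ⟨hmemA, hB⟩
          obtain ⟨w', hw'mem, hw'cl⟩ := Set.mem_iUnion₂.mp hmemB
          obtain ⟨hw'2, hw'v⟩ := hw'mem
          obtain ⟨-, heqadj⟩ := hw'cl
          have hadj : G.Adj u w' := by
            rcases heqadj with h | h
            · rw [h] at hfu; rw [show f w' = 2 from hw'2] at hfu
              exact absurd hfu (by norm_num)
            · exact h
          exact ⟨w', hadj, by
            simp only [hgdef, if_neg (show w' ≠ w from hw'v)]; exact hw'2⟩
        · exact ⟨w, hwadj, by simp [hgdef, hwv]; exact hw2⟩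
      have hlev : Vlevel g 1 ∪ Vlevel g 2 = Vlevel f 1 ∪ Vlevel f 2 := by
        ext u
        by_cases h : u = v
        · subst h; simp [Vlevel, hgdef, hv2']
        · simp [Vlevel, hgdef, h]
      have hgC : IsCRDF G g := ⟨hgRdf, by rw [hlev]; exact hC.2⟩
      have heq := hmin g hgC hglef
      have : g v = f v := congrFun heq v
      simp [hgdef, hv2'] at this
  · rintro ⟨hC, h1, h2⟩
    refine ⟨hC, ?_⟩
    intro g hg hle
    have hA : ∀ v, f v = 2 → g v = 2 := by
      intro v hv2
      by_contra hgv
      have hp := h2 v hv2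
      rw [Set.not_subset] at hp
      obtain ⟨u, hupriv, huv⟩ := hp
      have huv' : u ≠ v := huv
      obtain ⟨⟨huW, hueq⟩, hunot⟩ := hupriv
      have huadj : G.Adj u v := hueq.resolve_left huv'
      rcases huW with hu0 | hu2
      · have hgu : g u = 0 := Nat.le_zero.mp ((show f u = 0 from hu0) ▸ hle u)
        obtain ⟨w, hwadj, hw2⟩ := hg.1.2 u hgu
        have hfw : f w = 2 := le_antisymm (hf w) (hw2 ▸ hle w)
        have hwv : w ≠ v := by rintro rfl; exact hgv hw2
        exact hunot (Set.mem_biUnion (show w ∈ Vlevel f 2 \ {v} from ⟨hfw, hwv⟩)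
          ⟨Or.inl hu0, Or.inr hwadj⟩)
      · exact hunot (Set.mem_biUnion (show u ∈ Vlevel f 2 \ {v} from ⟨hu2, huv'⟩)
          ⟨Or.inr hu2, Or.inl rfl⟩)
    have hB : ∀ v, f v = 1 → g v = 1 := by
      intro v hv1
      have hgle : g v ≤ 1 := (show f v = 1 from hv1) ▸ hle v
      rcases Nat.lt_or_ge (g v) 1 with h | h
      · exfalso
        have hgv : g v = 0 := Nat.lt_one_iff.mp h
        obtain ⟨w, hwadj, hw2⟩ := hg.1.2 v hgv
        have hfw : f w = 2 := le_antisymm (hf w) (hw2 ▸ hle w)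
        have hne : G.neighborSet v ∩ Vlevel f 2 ≠ ∅ :=
          Set.nonempty_iff_ne_empty.mp ⟨w, hwadj, hfw⟩
        have hT : ¬ (G.induce ((Vlevel f 1 ∪ Vlevel f 2) \ {v})).Connected :=
          (h1 v hv1).resolve_left hne
        apply hT
        apply conn_aux (S := Vlevel g 1 ∪ Vlevel g 2) ?_ hg.2 ?_
        · rintro u (hu1 | hu2)
          · have hgu1 : g u = 1 := hu1
            have hfu2 : f u ≠ 2 := fun hh => by
              rw [hA u hh] at hgu1; exact absurd hgu1 (by norm_num)
            have hfu : f u = 1 := by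
              have h3 : (1:ℕ) ≤ f u := hgu1 ▸ hle u
              have h4 : f u ≤ 2 := hf u
              omega
            have huvne : u ≠ v := by
              rintro rfl; rw [hgv] at hgu1; exact absurd hgu1 (by norm_num)
            exact ⟨Or.inl hfu, by simpa using huvne⟩
          · have hgu2 : g u = 2 := hu2
            have hfu : f u = 2 := le_antisymm (hf u) (hgu2 ▸ hle u)
            have huvne : u ≠ v := by
              rintro rfl; rw [hgv] at hgu2; exact absurd hgu2 (by norm_num)
            exact ⟨Or.inr hfu, by simpa using huvne⟩
        · rintro t ⟨ht1, htv⟩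
          rcases ht1 with htf1 | htf2
          · have hgt : g t ≤ 1 := (show f t = 1 from htf1) ▸ hle t
            rcases Nat.lt_or_ge (g t) 1 with h' | h'
            · have hgt0 : g t = 0 := Nat.lt_one_iff.mp h'
              obtain ⟨w', hw'adj, hw'2⟩ := hg.1.2 t hgt0
              exact Or.inr ⟨w', Or.inr hw'2, hw'adj⟩
            · exact Or.inl (Or.inl (le_antisymm hgt h'))
          · exact Or.inl (Or.inr (hA t htf2))
      · omega
    funext v
    have hv := hf v
    have hcases : f v = 0 ∨ f v = 1 ∨ f v = 2 := by omega
    rcases hcases with h | h | h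
    · have hg0 : g v ≤ 0 := (show f v = 0 from h) ▸ hle v
      omega
    · rw [h]; exact hB v h
    · rw [h]; exact hA v h
end

section
/- The property of being a total Roman dominating function is a nice Roman domination property; concretely, for every finite simple graph G=(V,E) and every total Roman dominating function f on G: (i) for every v ∈ V_0(f), the function f + χ_{{v}} is a total Roman dominating function; and (ii) for every v ∈ V_2(f), the function f − χ_{{v}} is a total Roman dominating function if and only if P_{G[V_0(f) ∪ V_2(f)], V_2(f)}(v) ⊆ {v}. -/
open Set

variable {V : Type*}

/-- being a total Roman dominating function is a nice Roman domination
property. -/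
theorem stmt10 [Fintype V] (G : SimpleGraph V) (f : V → ℕ) (hf : IsTRDF G f) :
    (∀ v ∈ Vlevel f 0, IsTRDF G (f + chi {v})) ∧
    (∀ v ∈ Vlevel f 2,
      (IsTRDF G (f - chi {v}) ↔
        privNbhd G (Vlevel f 0 ∪ Vlevel f 2) (Vlevel f 2) v ⊆ {v})) := by
  classical
  obtain ⟨⟨hle, hrdf⟩, htot⟩ := hf
  constructor
  · -- Part (i)
    intro v hv
    have hv0 : f v = 0 := hv
    have hg : ∀ u, (f + chi {v}) u = if u = v then 1 else f u := by
      intro u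
      by_cases h : u = v
      · subst h; simp [chi, hv0]
      · simp [chi, Set.indicator_of_notMem, h]
    refine ⟨⟨?_, ?_⟩, ?_⟩
    · intro u; rw [hg]; split
      · omega
      · exact hle u
    · intro u hu
      rw [hg] at hu
      have huv : u ≠ v := by intro h; rw [if_pos h] at hu; omega
      rw [if_neg huv] at hu
      obtain ⟨w, hw, hw2⟩ := hrdf u hu
      have hwv : w ≠ v := by intro h; rw [h, hv0] at hw2; omega
      exact ⟨w, hw, by rw [hg, if_neg hwv]; exact hw2⟩
    · intro u hu
      by_cases huv : u = v
      · subst huv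
        obtain ⟨w, hw, hw2⟩ := hrdf u hv0
        have hwv : w ≠ u := by intro h; rw [h, hv0] at hw2; omega
        refine ⟨w, Or.inr ?_, hw⟩
        show (f + chi {u}) w = 2
        rw [hg, if_neg hwv]; exact hw2
      · have hu' : u ∈ Vlevel f 1 ∪ Vlevel f 2 := by
          rcases hu with h | h
          · left; have : (f + chi {v}) u = 1 := h; rwa [hg, if_neg huv] at this
          · right; have : (f + chi {v}) u = 2 := h; rwa [hg, if_neg huv] at this
        obtain ⟨w, hw, hadj⟩ := htot u hu'
        have hwv : w ≠ v := by
          intro h; subst h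
          rcases hw with h | h
          · have : f w = 1 := h; omega
          · have : f w = 2 := h; omega
        refine ⟨w, ?_, hadj⟩
        rcases hw with h | h
        · left; show (f + chi {v}) w = 1; rw [hg, if_neg hwv]; exact h
        · right; show (f + chi {v}) w = 2; rw [hg, if_neg hwv]; exact h
  · -- Part (ii)
    intro v hv
    have hv2 : f v = 2 := hv
    have hg : ∀ u, (f - chi {v}) u = if u = v then 1 else f u := by
      intro u
      by_cases h : u = v
      · subst h; simp [chi, hv2]
      · simp [chi, Set.indicator_of_notMem, h]
    have htot' : ∀ u ∈ Vlevel (f - chi {v}) 1 ∪ Vlevel (f - chi {v}) 2,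
        ∃ w ∈ Vlevel (f - chi {v}) 1 ∪ Vlevel (f - chi {v}) 2, G.Adj u w := by
      intro u hu
      have hu' : u ∈ Vlevel f 1 ∪ Vlevel f 2 := by
        by_cases huv : u = v
        · right; rw [huv]; exact hv2
        · rcases hu with h | h
          · left; have : (f - chi {v}) u = 1 := h; rwa [hg, if_neg huv] at this
          · right; have : (f - chi {v}) u = 2 := h; rwa [hg, if_neg huv] at this
      obtain ⟨w, hw, hadj⟩ := htot u hu'
      refine ⟨w, ?_, hadj⟩
      by_cases hwv : w = v
      · left; show (f - chi {v}) w = 1; rw [hg, if_pos hwv]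
      · rcases hw with h | h
        · left; show (f - chi {v}) w = 1; rw [hg, if_neg hwv]; exact h
        · right; show (f - chi {v}) w = 2; rw [hg, if_neg hwv]; exact h
    constructor
    · rintro ⟨⟨_, hrdf'⟩, _⟩
      intro u hu
      obtain ⟨⟨huW, huv⟩, hpriv⟩ := hu
      show u ∈ ({v} : Set V)
      by_contra huvne
      have hune : u ≠ v := huvne
      exfalso
      apply hpriv
      rcases huW with h0 | h2
      · -- f u = 0
        have hu0 : f u = 0 := h0
        have hgu0 : (f - chi {v}) u = 0 := by rw [hg, if_neg hune]; exact hu0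
        obtain ⟨w, hw, hw2⟩ := hrdf' u hgu0
        have hwv : w ≠ v := by
          intro h; subst h; rw [hg, if_pos rfl] at hw2; omega
        have hwf2 : f w = 2 := by rwa [hg, if_neg hwv] at hw2
        refine Set.mem_iUnion₂.mpr ⟨w, ⟨hwf2, hwv⟩, ⟨Or.inl hu0, Or.inr hw⟩⟩
      · -- f u = 2
        exact Set.mem_iUnion₂.mpr ⟨u, ⟨h2, hune⟩, ⟨Or.inr h2, Or.inl rfl⟩⟩
    · intro hpriv
      refine ⟨⟨?_, ?_⟩, htot'⟩
      · intro u; rw [hg]; split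
        · omega
        · exact hle u
      · intro u hu
        rw [hg] at hu
        have hune : u ≠ v := by intro h; rw [if_pos h] at hu; omega
        rw [if_neg hune] at hu
        obtain ⟨w, hw, hw2⟩ := hrdf u hu
        by_cases hwv : w = v
        · -- u adjacent to v; use privacy
          subst hwv
          have humem : u ∈ closedNbhdIn G (Vlevel f 0 ∪ Vlevel f 2) w :=
            ⟨Or.inl hu, Or.inr hw⟩
          have : u ∉ privNbhd G (Vlevel f 0 ∪ Vlevel f 2) (Vlevel f 2) w := by
            intro h; exact hune (hpriv h)
          have hmem : u ∈ closedNbhdSetIn G (Vlevel f 0 ∪ Vlevel f 2)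
              (Vlevel f 2 \ {w}) := by
            by_contra hc
            exact this ⟨humem, hc⟩
          obtain ⟨w', hw', hu'⟩ := Set.mem_iUnion₂.mp hmem
          obtain ⟨hw'2, hw'v⟩ := hw'
          have hw'f2 : f w' = 2 := hw'2
          obtain ⟨_, huw'⟩ := hu'
          have hadj : G.Adj u w' := by
            rcases huw' with h | h
            · exfalso; rw [h] at hu; rw [hu] at hw'f2; omega
            · exact h
          refine ⟨w', hadj, ?_⟩
          rw [hg, if_neg (by simpa using hw'v)]; exact hw'f2
        · exact ⟨w, hw, by rw [hg, if_neg hwv]; exact hw2⟩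
end

section
/- Let G=(V,E) be a cobipartite graph whose vertex set is partitioned into two disjoint cliques C_1 and C_2. Then every minimal connected Roman dominating function f : V → {0,1,2} on G satisfies |V_1(f) ∩ N(V_2(f) ∩ C_1)| ≤ 1 and |V_1(f) ∩ N(V_2(f) ∩ C_2)| ≤ 1. -/
open Set

variable {V : Type*}

/-- Extract a cross edge between the two cliques from connectivity. -/
lemma cross_edge (G : SimpleGraph V) (C1 C2 : Set V) (hUnion : C1 ∪ C2 = Set.univ)
    (hDisj : Disjoint C1 C2) (S : Set V) (hconn : (G.induce S).Connected)
    {p q : V} (hp : p ∈ S) (hpc : p ∈ C2) (hq : q ∈ S) (hqc : q ∈ C1) :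
    ∃ a b, a ∈ S ∧ a ∈ C1 ∧ b ∈ S ∧ b ∈ C2 ∧ G.Adj a b := by
  obtain ⟨wlk⟩ := hconn.preconnected ⟨p, hp⟩ ⟨q, hq⟩
  suffices H : ∀ (u v : S), (G.induce S).Walk u v → (u : V) ∈ C2 → (v : V) ∈ C1 →
      ∃ a b, a ∈ S ∧ a ∈ C1 ∧ b ∈ S ∧ b ∈ C2 ∧ G.Adj a b from H _ _ wlk hpc hqc
  intro u v wk
  induction wk with
  | nil =>
    intro h1 h2
    exact absurd h1 (Set.disjoint_left.mp hDisj h2)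
  | @cons u r v h pth ih =>
    intro hu hv
    have hr : (r : V) ∈ C1 ∪ C2 := hUnion ▸ Set.mem_univ _
    rcases hr with hr1 | hr2
    · have hadj : G.Adj (u : V) (r : V) := h
      exact ⟨r, u, r.2, hr1, u.2, hu, hadj.symm⟩
    · exact ih hr2 hv

/-- Deleting a suitable value-1 vertex preserves being a cRdf. -/
lemma del_crdf [DecidableEq V] (G : SimpleGraph V) (C1 C2 : Set V)
    (hUnion : C1 ∪ C2 = Set.univ) (hC1 : G.IsClique C1) (hC2 : G.IsClique C2)
    (f : V → ℕ) (hfP : IsCRDF G f)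
    (z w : V) (hz : f z = 1) (hw : f w = 2) (hwC1 : w ∈ C1) (hadj : G.Adj z w)
    (hbridge : ((((Vlevel f 1 ∪ Vlevel f 2) \ {z}) ∩ C2)).Nonempty →
      ∃ a b, a ∈ (Vlevel f 1 ∪ Vlevel f 2) \ {z} ∧ a ∈ C1 ∧
        b ∈ (Vlevel f 1 ∪ Vlevel f 2) \ {z} ∧ b ∈ C2 ∧ G.Adj a b) :
    IsCRDF G (Function.update f z 0) := by
  classical
  have hwz : w ≠ z := by intro e; rw [e, hz] at hw; omega
  set S' : Set V := (Vlevel f 1 ∪ Vlevel f 2) \ {z} with hS'def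
  have hS : Vlevel (Function.update f z 0) 1 ∪ Vlevel (Function.update f z 0) 2 = S' := by
    ext v
    rcases eq_or_ne v z with rfl | hv
    · simp [Vlevel, S']
    · simp [Vlevel, Function.update_of_ne hv, hv, S']
  constructor
  · constructor
    · intro v
      rcases eq_or_ne v z with rfl | hv
      · simp
      · rw [Function.update_of_ne hv]; exact hfP.1.1 v
    · intro v hv0
      rcases eq_or_ne v z with rfl | hv
      · exact ⟨w, hadj, by rw [Function.update_of_ne hwz]; exact hw⟩
      · have hfv : f v = 0 := by rwa [Function.update_of_ne hv] at hv0
        obtain ⟨u, hu, hu2⟩ := hfP.1.2 v hfv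
        have huz : u ≠ z := by intro e; rw [e, hz] at hu2; omega
        exact ⟨u, hu, by rw [Function.update_of_ne huz]; exact hu2⟩
  · rw [hS]
    have hwS' : w ∈ S' := ⟨Or.inr hw, by simp [hwz]⟩
    have : Nonempty ↥S' := ⟨⟨w, hwS'⟩⟩
    have hreach : ∀ v : S', (G.induce S').Reachable v ⟨w, hwS'⟩ := by
      rintro ⟨v, hvS⟩
      have hv12 : v ∈ C1 ∪ C2 := hUnion ▸ Set.mem_univ _
      rcases hv12 with hv1 | hv2
      · rcases eq_or_ne v w with rfl | hne
        · exact SimpleGraph.Reachable.refl _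
        · have : (G.induce S').Adj ⟨v, hvS⟩ ⟨w, hwS'⟩ := hC1 hv1 hwC1 hne
          exact this.reachable
      · obtain ⟨a, b, haS, haC, hbS, hbC, hab⟩ := hbridge ⟨v, hvS, hv2⟩
        have r1 : (G.induce S').Reachable ⟨v, hvS⟩ ⟨b, hbS⟩ := by
          rcases eq_or_ne v b with rfl | hne
          · exact SimpleGraph.Reachable.refl _
          · exact (show (G.induce S').Adj ⟨v, hvS⟩ ⟨b, hbS⟩ from hC2 hv2 hbC hne).reachable
        have r2 : (G.induce S').Reachable ⟨b, hbS⟩ ⟨a, haS⟩ :=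
          (show (G.induce S').Adj ⟨b, hbS⟩ ⟨a, haS⟩ from hab.symm).reachable
        have r3 : (G.induce S').Reachable ⟨a, haS⟩ ⟨w, hwS'⟩ := by
          rcases eq_or_ne a w with rfl | hne
          · exact SimpleGraph.Reachable.refl _
          · exact (show (G.induce S').Adj ⟨a, haS⟩ ⟨w, hwS'⟩ from hC1 haC hwC1 hne).reachable
        exact (r1.trans r2).trans r3
    exact ⟨fun u v => (hreach u).trans (hreach v).symm⟩

/-- Key lemma: the bound for the first clique. -/
lemma key_bound [Fintype V] (G : SimpleGraph V) (C1 C2 : Set V)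
    (hUnion : C1 ∪ C2 = Set.univ) (hDisj : Disjoint C1 C2)
    (hC1 : G.IsClique C1) (hC2 : G.IsClique C2)
    (f : V → ℕ) (hf : MinimalWrt (IsCRDF G) f) :
    (Vlevel f 1 ∩ openNbhdSet G (Vlevel f 2 ∩ C1)).ncard ≤ 1 := by
  classical
  by_contra hcon
  push_neg at hcon
  obtain ⟨x, y, hx, hy, hxy⟩ := (Set.one_lt_ncard_iff (Set.toFinite _)).mp hcon
  obtain ⟨hx1, hxN⟩ := hx
  obtain ⟨hy1, hyN⟩ := hy
  have hx1' : f x = 1 := hx1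
  have hy1' : f y = 1 := hy1
  simp only [openNbhdSet, Set.mem_iUnion, SimpleGraph.mem_neighborSet] at hxN hyN
  obtain ⟨ux, ⟨hux2, huxC⟩, huxAdj⟩ := hxN
  obtain ⟨uy, ⟨huy2, huyC⟩, huyAdj⟩ := hyN
  have hux2' : f ux = 2 := hux2
  have huy2' : f uy = 2 := huy2
  -- helper to derive the contradiction once we know deleting some value-1 vertex works
  have contra : ∀ z : V, f z = 1 → IsCRDF G (Function.update f z 0) → False := by
    intro z hz hg
    have hle : Function.update f z 0 ≤ f := by
      intro v
      rcases eq_or_ne v z with rfl | hv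
      · simp
      · rw [Function.update_of_ne hv]
    have := hf.2 _ hg hle
    have := congrFun this z
    rw [Function.update_self] at this
    omega
  set S : Set V := Vlevel f 1 ∪ Vlevel f 2 with hSdef
  have hxS : x ∈ S := Or.inl hx1'
  have hyS : y ∈ S := Or.inl hy1'
  have huxS : ux ∈ S := Or.inr hux2'
  have huxx : ux ≠ x := by intro e; rw [e, hx1'] at hux2'; omega
  have huxy : ux ≠ y := by intro e; rw [e, hy1'] at hux2'; omega
  have huyx : uy ≠ x := by intro e; rw [e, hx1'] at huy2'; omega
  have huyy : uy ≠ y := by intro e; rw [e, hy1'] at huy2'; omega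
  have hxC : x ∈ C1 ∪ C2 := hUnion ▸ Set.mem_univ _
  have hyC : y ∈ C1 ∪ C2 := hUnion ▸ Set.mem_univ _
  rcases hyC with hyC1 | hyC2
  · rcases hxC with hxC1 | hxC2
    · -- both x and y in C1
      by_cases hne : ((S \ {x}) ∩ C2).Nonempty
      · obtain ⟨p, ⟨hpS, _⟩, hpC2⟩ := hne
        obtain ⟨a, b, haS, haC, hbS, hbC, hab⟩ :=
          cross_edge G C1 C2 hUnion hDisj S hf.1.2 hpS hpC2 huxS huxC
        rcases eq_or_ne a x with rfl | hax
        · -- all cross edges through x: delete y instead, bridge (x, b)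
          refine contra y hy1' (del_crdf G C1 C2 hUnion hC1 hC2 f hf.1 y uy hy1' huy2'
            huyC huyAdj.symm (fun _ => ⟨a, b, ⟨haS, by simpa using hxy⟩, haC,
              ⟨hbS, by simp only [Set.mem_singleton_iff]
                       exact fun e => (Set.disjoint_left.mp hDisj hyC1) (e ▸ hbC)⟩,
              hbC, hab⟩))
        · -- delete x, bridge (a, b)
          refine contra x hx1' (del_crdf G C1 C2 hUnion hC1 hC2 f hf.1 x ux hx1' hux2'
            huxC huxAdj.symm (fun _ => ⟨a, b, ⟨haS, by simpa using hax⟩, haC,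
              ⟨hbS, by simp only [Set.mem_singleton_iff]
                       exact fun e => (Set.disjoint_left.mp hDisj hxC1) (e ▸ hbC)⟩,
              hbC, hab⟩))
      · exact contra x hx1' (del_crdf G C1 C2 hUnion hC1 hC2 f hf.1 x ux hx1' hux2'
          huxC huxAdj.symm (fun h => absurd h hne))
    · -- x ∈ C2: delete y, bridge (ux, x)
      refine contra y hy1' (del_crdf G C1 C2 hUnion hC1 hC2 f hf.1 y uy hy1' huy2'
        huyC huyAdj.symm (fun _ => ⟨ux, x, ⟨huxS, by simpa using huxy⟩, huxC,
          ⟨hxS, by simpa using hxy⟩, hxC2, huxAdj⟩))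
  · -- y ∈ C2: delete x, bridge (uy, y)
    have huyS : uy ∈ S := Or.inr huy2'
    refine contra x hx1' (del_crdf G C1 C2 hUnion hC1 hC2 f hf.1 x ux hx1' hux2'
      huxC huxAdj.symm (fun _ => ⟨uy, y, ⟨huyS, by simpa using huyx⟩, huyC,
        ⟨hyS, by simpa using hxy.symm⟩, hyC2, huyAdj⟩))

/-- on a cobipartite graph with clique partition `C₁, C₂`, every minimal
connected Roman dominating function `f` satisfies `|V_1(f) ∩ N(V_2(f) ∩ C_i)| ≤ 1`. -/
theorem stmt12 [Fintype V] (G : SimpleGraph V) (C1 C2 : Set V)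
    (hUnion : C1 ∪ C2 = Set.univ) (hDisj : Disjoint C1 C2)
    (hC1 : G.IsClique C1) (hC2 : G.IsClique C2)
    (f : V → ℕ) (hf : MinimalWrt (IsCRDF G) f) :
    (Vlevel f 1 ∩ openNbhdSet G (Vlevel f 2 ∩ C1)).ncard ≤ 1 ∧
    (Vlevel f 1 ∩ openNbhdSet G (Vlevel f 2 ∩ C2)).ncard ≤ 1 := by
  exact ⟨key_bound G C1 C2 hUnion hDisj hC1 hC2 f hf,
    key_bound G C2 C1 (by rw [Set.union_comm]; exact hUnion) hDisj.symm hC2 hC1 f hf⟩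
end

section
/- Let G=(V,E) be a cobipartite graph of order n and A ⊆ V. Then the number of minimal connected Roman dominating functions f on G with V_2(f) = A is at most n² + n + 1, i.e. |C_{𝒞ℛ𝒟ℱ,G}[A]| ≤ n² + n + 1. -/
open Set

variable {V : Type*}

section Aux

variable {V : Type*}

private lemma mem_open_iff (G : SimpleGraph V) (A : Set V) (v : V) :
    v ∈ openNbhdSet G A ↔ ∃ a ∈ A, G.Adj a v := by
  simp [openNbhdSet, SimpleGraph.neighborSet]

/-- If a clique contains the whole set, the induced graph is connected (when nonempty). -/
private lemma connected_of_clique (G : SimpleGraph V) {C S : Set V}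
    (hc : G.IsClique C) (hS : S ⊆ C) (hne : S.Nonempty) : (G.induce S).Connected := by
  obtain ⟨x, hx⟩ := hne
  have hNE : Nonempty ↑S := ⟨⟨x, hx⟩⟩
  refine ⟨fun a b => ?_⟩
  by_cases hab : (a : V) = b
  · have : a = b := Subtype.ext hab
    rw [this]
  · exact SimpleGraph.Adj.reachable (by exact hc (hS a.2) (hS b.2) hab)

/-- If there is a cross edge, the induced cobipartite graph is connected. -/
private lemma connected_of_cross (G : SimpleGraph V) {C1 C2 S : Set V}
    (hU : C1 ∪ C2 = Set.univ) (hc1 : G.IsClique C1) (hc2 : G.IsClique C2)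
    {x z : V} (hx : x ∈ S) (hz : z ∈ S) (hxC : x ∈ C1) (hzC : z ∈ C2)
    (hadj : G.Adj x z) : (G.induce S).Connected := by
  have hmem : ∀ v : V, v ∈ C1 ∨ v ∈ C2 := by
    intro v
    have : v ∈ C1 ∪ C2 := hU ▸ Set.mem_univ v
    exact this
  have hxz : (G.induce S).Reachable ⟨x, hx⟩ ⟨z, hz⟩ := SimpleGraph.Adj.reachable (by exact hadj)
  have key : ∀ a : ↑S, (G.induce S).Reachable a ⟨x, hx⟩ := by
    intro a
    rcases hmem a with ha | ha
    · by_cases hax : (a : V) = x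
      · have : a = (⟨x, hx⟩ : ↑S) := Subtype.ext hax
        rw [this]
      · exact SimpleGraph.Adj.reachable (by exact hc1 ha hxC hax)
    · have haz : (G.induce S).Reachable a ⟨z, hz⟩ := by
        by_cases haz' : (a : V) = z
        · have : a = (⟨z, hz⟩ : ↑S) := Subtype.ext haz'
          rw [this]
        · exact SimpleGraph.Adj.reachable (by exact hc2 ha hzC haz')
      exact haz.trans hxz.symm
  have hNE : Nonempty ↑S := ⟨⟨x, hx⟩⟩
  exact ⟨fun a b => (key a).trans (key b).symm⟩

/-- A walk from a `C1`-vertex to a non-`C1`-vertex contains a cross edge. -/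
private lemma cross_edge_of_walk (G : SimpleGraph V) {C1 D : Set V}
    {u v : ↑D} (w : (G.induce D).Walk u v) (hu : (u : V) ∈ C1) (hv : (v : V) ∉ C1) :
    ∃ a b : V, a ∈ D ∧ b ∈ D ∧ a ∈ C1 ∧ b ∉ C1 ∧ G.Adj a b := by
  induction w with
  | nil => exact absurd hu hv
  | @cons p q r h w ih =>
    by_cases hq : (q : V) ∈ C1
    · exact ih hq hv
    · exact ⟨p, q, p.2, q.2, hu, hq, h⟩

/-- Two distinct vertices of the same clique cannot both be cut vertices
of the (connected) induced cobipartite graph. -/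
private lemma two_cut_impossible (G : SimpleGraph V) {C1 C2 D : Set V}
    (hU : C1 ∪ C2 = Set.univ) (hdisj : Disjoint C1 C2)
    (hc1 : G.IsClique C1) (hc2 : G.IsClique C2)
    (hconn : (G.induce D).Connected)
    {y₁ y₂ : V} (hy₁ : y₁ ∈ D) (hy₂ : y₂ ∈ D) (hy₁C : y₁ ∈ C1) (hy₂C : y₂ ∈ C1)
    (hne : y₁ ≠ y₂)
    (h₁ : ¬ (G.induce (D \ {y₁})).Connected)
    (h₂ : ¬ (G.induce (D \ {y₂})).Connected) : False := by
  have hmem : ∀ v : V, v ∈ C1 ∨ v ∈ C2 := by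
    intro v
    have : v ∈ C1 ∪ C2 := hU ▸ Set.mem_univ v
    exact this
  -- Case: D ∩ C2 = ∅
  by_cases hDC2 : ∃ z ∈ D, z ∈ C2
  · obtain ⟨z, hzD, hzC⟩ := hDC2
    -- no cross edge avoiding yᵢ
    have nocross : ∀ a b : V, a ∈ D → b ∈ D → a ∈ C1 → b ∈ C2 → ¬ G.Adj a b := by
      intro a b haD hbD haC hbC hadj
      have hbne₁ : b ≠ y₁ := fun hb => hdisj.ne_of_mem hy₁C hbC hb.symm
      have hbne₂ : b ≠ y₂ := fun hb => hdisj.ne_of_mem hy₂C hbC hb.symm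
      rcases eq_or_ne a y₁ with rfl | hane₁
      · -- a = y₁, use h₂ : a ≠ y₂
        exact h₂ (connected_of_cross G hU hc1 hc2 ⟨haD, hne⟩ ⟨hbD, hbne₂⟩ haC hbC hadj)
      · exact h₁ (connected_of_cross G hU hc1 hc2 ⟨haD, hane₁⟩ ⟨hbD, hbne₁⟩ haC hbC hadj)
    -- but connectivity of G[D] forces a cross edge
    obtain ⟨w⟩ := hconn.preconnected ⟨y₁, hy₁⟩ ⟨z, hzD⟩
    have hzC1 : z ∉ C1 := fun h => hdisj.ne_of_mem h hzC rfl
    obtain ⟨a, b, haD, hbD, haC, hbC, hadj⟩ := cross_edge_of_walk G w hy₁C hzC1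
    have hbC2 : b ∈ C2 := (hmem b).resolve_left hbC
    exact nocross a b haD hbD haC hbC2 hadj
  · push_neg at hDC2
    have hsub : D \ {y₁} ⊆ C1 := by
      intro v hv
      exact (hmem v).resolve_right (hDC2 v hv.1)
    exact h₁ (connected_of_clique G hc1 hsub ⟨y₂, hy₂, hne.symm⟩)

end Aux

/-- on a cobipartite graph of order `n`, `|C_{CRDF,G}[A]| ≤ n² + n + 1`. -/
theorem stmt13 [Fintype V] (G : SimpleGraph V)
    (hcobi : ∃ C1 C2 : Set V, C1 ∪ C2 = Set.univ ∧ Disjoint C1 C2 ∧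
      G.IsClique C1 ∧ G.IsClique C2)
    (A : Set V) :
    (CSet (IsCRDF G) A).ncard ≤ (Fintype.card V) ^ 2 + Fintype.card V + 1 := by
  classical
  obtain ⟨C1, C2, hU, hdisj, hc1, hc2⟩ := hcobi
  set B : (V → ℕ) → Set V := fun f => Vlevel f 1 ∩ openNbhdSet G A with hBdef
  -- Step A: removing a vertex of `B f` from `V₁ ∪ V₂` disconnects the induced graph.
  have discon : ∀ f ∈ CSet (IsCRDF G) A, ∀ y ∈ B f,
      ¬ (G.induce ((Vlevel f 1 ∪ Vlevel f 2) \ {y})).Connected := by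
    rintro f ⟨hmin, hA⟩ y ⟨hy1, hyN⟩ hcon
    have hfy : f y = 1 := hy1
    have hf2 : ∀ v, f v = 2 ↔ v ∈ A := fun v => Set.ext_iff.1 hA v
    set g0 : V → ℕ := fun v => if v = y then 0 else f v with hg0
    have hgle : g0 ≤ f := by
      intro v; simp only [hg0]; split
      · exact Nat.zero_le _
      · exact le_refl _
    have hgR : IsRDF G g0 := by
      constructor
      · intro v; simp only [hg0]; split
        · omega
        · exact hmin.1.1.1 v
      · intro v hv
        by_cases hvy : v = y
        · subst hvy
          rw [mem_open_iff] at hyN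
          obtain ⟨a, haA, hadj⟩ := hyN
          have ha2 : f a = 2 := (hf2 a).2 haA
          have hay : a ≠ v := fun h => by rw [h, hfy] at ha2; omega
          exact ⟨a, hadj.symm, by simp only [hg0, if_neg hay]; exact ha2⟩
        · have hfv : f v = 0 := by simpa only [hg0, if_neg hvy] using hv
          obtain ⟨u, hadj, hu2⟩ := hmin.1.1.2 v hfv
          have huy : u ≠ y := fun h => by rw [h, hfy] at hu2; omega
          exact ⟨u, hadj, by simp only [hg0, if_neg huy]; exact hu2⟩
    have hlev : Vlevel g0 1 ∪ Vlevel g0 2 = (Vlevel f 1 ∪ Vlevel f 2) \ {y} := by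
      ext v
      by_cases hvy : v = y
      · subst hvy
        simp [Vlevel, hg0]
      · simp [Vlevel, hg0, hvy]
    have hgC : IsCRDF G g0 := ⟨hgR, by rw [hlev]; exact hcon⟩
    have heq := hmin.2 g0 hgC hgle
    have h0 : g0 y = f y := congrFun heq y
    simp only [hg0, if_pos rfl] at h0
    omega
  -- Step B: `B f` has at most 2 elements.
  have hB2 : ∀ f ∈ CSet (IsCRDF G) A, (B f).ncard ≤ 2 := by
    intro f hf
    by_contra hgt
    rw [not_le, Set.two_lt_ncard (Set.toFinite _)] at hgt
    obtain ⟨y₁, hy₁, y₂, hy₂, y₃, hy₃, h12, h13, h23⟩ := hgt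
    have hmem : ∀ v : V, v ∈ C1 ∨ v ∈ C2 := by
      intro v
      have : v ∈ C1 ∪ C2 := hU ▸ Set.mem_univ v
      exact this
    have hD : ∀ y, y ∈ B f → y ∈ Vlevel f 1 ∪ Vlevel f 2 := fun y hy => Or.inl hy.1
    have hconn : (G.induce (Vlevel f 1 ∪ Vlevel f 2)).Connected := hf.1.1.2
    have key : ∀ y y' : V, y ∈ B f → y' ∈ B f → y ≠ y' →
        (y ∈ C1 ∧ y' ∈ C1) ∨ (y ∈ C2 ∧ y' ∈ C2) → False := by
      rintro y y' hy hy' hne (⟨h1, h2⟩ | ⟨h1, h2⟩)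
      · exact two_cut_impossible G hU hdisj hc1 hc2 hconn (hD y hy) (hD y' hy') h1 h2 hne
          (discon f hf y hy) (discon f hf y' hy')
      · exact two_cut_impossible G (by rw [Set.union_comm]; exact hU) hdisj.symm hc2 hc1 hconn
          (hD y hy) (hD y' hy') h1 h2 hne (discon f hf y hy) (discon f hf y' hy')
    rcases hmem y₁ with h1 | h1 <;> rcases hmem y₂ with h2 | h2 <;> rcases hmem y₃ with h3 | h3 <;>
      first
        | exact key y₁ y₂ hy₁ hy₂ h12 (Or.inl ⟨h1, h2⟩)
        | exact key y₁ y₂ hy₁ hy₂ h12 (Or.inr ⟨h1, h2⟩)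
        | exact key y₁ y₃ hy₁ hy₃ h13 (Or.inl ⟨h1, h3⟩)
        | exact key y₁ y₃ hy₁ hy₃ h13 (Or.inr ⟨h1, h3⟩)
        | exact key y₂ y₃ hy₂ hy₃ h23 (Or.inl ⟨h2, h3⟩)
        | exact key y₂ y₃ hy₂ hy₃ h23 (Or.inr ⟨h2, h3⟩)
  -- Step C: `f` is determined by `B f`.
  have hV1 : ∀ f ∈ CSet (IsCRDF G) A,
      Vlevel f 1 = B f ∪ (Set.univ \ (A ∪ openNbhdSet G A)) := by
    intro f hf
    have hf2 : ∀ v, f v = 2 ↔ v ∈ A := fun v => Set.ext_iff.1 hf.2 v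
    ext v
    constructor
    · intro hv
      by_cases hN : v ∈ openNbhdSet G A
      · exact Or.inl ⟨hv, hN⟩
      · refine Or.inr ⟨trivial, ?_⟩
        rintro (hA' | hNN)
        · have h2 := (hf2 v).2 hA'
          have h1 : f v = 1 := hv
          omega
        · exact hN hNN
    · rintro (⟨hv, _⟩ | ⟨-, hv⟩)
      · exact hv
      · have h2 : f v ≠ 2 := fun h => hv (Or.inl ((hf2 v).1 h))
        have h0 : f v ≠ 0 := by
          intro h
          obtain ⟨u, hadj, hu2⟩ := hf.1.1.1.2 v h
          exact hv (Or.inr ((mem_open_iff G A v).2 ⟨u, (hf2 u).1 hu2, hadj.symm⟩))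
        have hb := hf.1.1.1.1 v
        show f v = 1
        omega
  have hinj : Set.InjOn B (CSet (IsCRDF G) A) := by
    intro f hf g hg hEq
    have h1 : Vlevel f 1 = Vlevel g 1 := by rw [hV1 f hf, hV1 g hg, hEq]
    funext v
    have hf2 : f v = 2 ↔ v ∈ A := Set.ext_iff.1 hf.2 v
    have hg2 : g v = 2 ↔ v ∈ A := Set.ext_iff.1 hg.2 v
    have e1 : f v = 1 ↔ g v = 1 := by
      constructor
      · intro h
        exact (h1 ▸ (h : v ∈ Vlevel f 1) : v ∈ Vlevel g 1)
      · intro h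
        exact (h1.symm ▸ (h : v ∈ Vlevel g 1) : v ∈ Vlevel f 1)
    by_cases hA' : v ∈ A
    · rw [hf2.2 hA', hg2.2 hA']
    · have hf2' : f v ≠ 2 := fun h => hA' (hf2.1 h)
      have hg2' : g v ≠ 2 := fun h => hA' (hg2.1 h)
      by_cases h1' : f v = 1
      · rw [h1', (e1.1 h1').symm]
      · have hg1' : g v ≠ 1 := fun h => h1' (e1.2 h)
        have hbf := hf.1.1.1.1 v
        have hbg := hg.1.1.1.1 v
        omega
  -- Step D: counting.
  set enc : Option (V × V) → Set V := fun p => p.elim ∅ (fun q => {q.1, q.2}) with hencdef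
  have himg : ∀ f ∈ CSet (IsCRDF G) A, B f ∈ Set.range enc := by
    intro f hf
    have h2 := hB2 f hf
    have hfin : (B f).Finite := Set.toFinite _
    rcases h : (B f).ncard with _ | _ | _ | n
    · exact ⟨none, ((Set.ncard_eq_zero hfin).1 h).symm⟩
    · obtain ⟨a, ha⟩ := Set.ncard_eq_one.1 h
      refine ⟨some (a, a), ?_⟩
      simp only [hencdef, Option.elim, ha, Set.pair_eq_singleton]
    · obtain ⟨a, b, hab, hS⟩ := Set.ncard_eq_two.1 h
      exact ⟨some (a, b), hS.symm⟩
    · omega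
  calc (CSet (IsCRDF G) A).ncard
      ≤ (Set.range enc).ncard :=
        Set.ncard_le_ncard_of_injOn B himg hinj (Set.toFinite _)
    _ ≤ Nat.card (Option (V × V)) := by
        rw [← Set.image_univ, ← Set.ncard_univ (Option (V × V))]
        exact Set.ncard_image_le (Set.toFinite _)
    _ ≤ Fintype.card V ^ 2 + Fintype.card V + 1 := by
        rw [Nat.card_eq_fintype_card, Fintype.card_option, Fintype.card_prod, pow_two]
        omega
end

section
/- Let G=(V,E) be a cobipartite graph whose vertex set is partitioned into two disjoint cliques C_1 and C_2, let A ⊆ V, and let f_A := 2·χ_A + χ_{V∖N[A]}. Then every minimal total Roman dominating function g on G with V_2(g) = A satisfies |(V_1(g) ∩ C_1) ∖ V_1(f_A)| ≤ 1 and |(V_1(g) ∩ C_2) ∖ V_1(f_A)| ≤ 1. -/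
open Set

variable {V : Type*}

/-- Dropping a value-1 vertex with a 2-neighbor from a minimal tRdf produces a "bad"
vertex whose only positive neighbor is the dropped vertex. -/
lemma exists_bad {G : SimpleGraph V} {g : V → ℕ}
    (hg : MinimalWrt (IsTRDF G) g) {x a : V}
    (hx1 : g x = 1) (ha2 : g a = 2) (hxa : G.Adj x a) :
    ∃ v, v ≠ x ∧ (g v = 1 ∨ g v = 2) ∧
      ∀ y, y ≠ x → (g y = 1 ∨ g y = 2) → ¬ G.Adj v y := by
  obtain ⟨⟨⟨hle2, hrdf⟩, htot⟩, hmin⟩ := hg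
  classical
  set d : V → ℕ := fun v => if v = x then 0 else g v with hd
  have hdle : d ≤ g := by
    intro v; by_cases h : v = x <;> simp [hd, h]
  have hdneq : d ≠ g := by
    intro h
    have := congrFun h x
    simp [hd, hx1] at this
  have hmem : ∀ v, v ∈ Vlevel d 1 ∪ Vlevel d 2 ↔ v ≠ x ∧ (g v = 1 ∨ g v = 2) := by
    intro v
    by_cases h : v = x <;> simp [Vlevel, hd, h]
  have hrdfd : IsRDF G d := by
    constructor
    · intro v; by_cases h : v = x <;> simp [hd, h, hle2 v]
    · intro v hv
      by_cases h : v = x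
      · subst h
        refine ⟨a, hxa, ?_⟩
        have : a ≠ v := fun h => by rw [h, hx1] at ha2; exact absurd ha2 (by norm_num)
        simp [hd, this, ha2]
      · simp [hd, h] at hv
        obtain ⟨u, huv, hu2⟩ := hrdf v hv
        have : u ≠ x := fun h => by rw [h, hx1] at hu2; exact absurd hu2 (by norm_num)
        exact ⟨u, huv, by simp [hd, this, hu2]⟩
  have hnt : ¬ IsTRDF G d := by
    intro h
    exact hdneq (hmin d h hdle)
  have hfail : ¬ ∀ v ∈ Vlevel d 1 ∪ Vlevel d 2, ∃ u ∈ Vlevel d 1 ∪ Vlevel d 2, G.Adj v u := by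
    intro h; exact hnt ⟨hrdfd, h⟩
  push_neg at hfail
  obtain ⟨v, hv, hvbad⟩ := hfail
  rw [hmem] at hv
  refine ⟨v, hv.1, hv.2, ?_⟩
  intro y hyx hy hadj
  exact hvbad y ((hmem y).2 ⟨hyx, hy⟩) hadj

/-- Key lemma: two value-1 vertices of a minimal tRdf lying in the same clique and in
`N[V_2(g)]` coincide. -/
lemma key_same (G : SimpleGraph V) (C C' : Set V)
    (hUnion : C ∪ C' = Set.univ) (hC : G.IsClique C) (hC' : G.IsClique C')
    (g : V → ℕ) (hg : MinimalWrt (IsTRDF G) g)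
    {u w : V} (hu1 : g u = 1) (hw1 : g w = 1) (huC : u ∈ C) (hwC : w ∈ C)
    (huN : u ∈ closedNbhdSet G (Vlevel g 2)) (hwN : w ∈ closedNbhdSet G (Vlevel g 2)) :
    u = w := by
  by_contra hne
  have hget2 : ∀ z : V, g z = 1 → z ∈ closedNbhdSet G (Vlevel g 2) →
      ∃ a, g a = 2 ∧ G.Adj z a := by
    intro z hz1 hzN
    simp only [closedNbhdSet, closedNbhd, mem_iUnion, mem_setOf_eq] at hzN
    obtain ⟨a, ha, h⟩ := hzN
    have ha2 : g a = 2 := ha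
    refine ⟨a, ha2, h.resolve_left ?_⟩
    rintro rfl; rw [hz1] at ha2; exact absurd ha2 (by norm_num)
  obtain ⟨a, ha2, hua⟩ := hget2 u hu1 huN
  obtain ⟨b, hb2, hwb⟩ := hget2 w hw1 hwN
  obtain ⟨vu, hvu_ne, hvu_pos, hvu_bad⟩ := exists_bad hg hu1 ha2 hua
  obtain ⟨vw, hvw_ne, hvw_pos, hvw_bad⟩ := exists_bad hg hw1 hb2 hwb
  -- vu ≠ w : w has positive neighbor b ≠ u
  have hbu : b ≠ u := fun h => by rw [h, hu1] at hb2; exact absurd hb2 (by norm_num)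
  have hvu_ne_w : vu ≠ w := by
    rintro rfl
    exact hvu_bad b hbu (Or.inr hb2) hwb
  -- vw ≠ u : u has positive neighbor a ≠ w
  have haw : a ≠ w := fun h => by rw [h, hw1] at ha2; exact absurd ha2 (by norm_num)
  have hvw_ne_u : vw ≠ u := by
    rintro rfl
    exact hvw_bad a haw (Or.inr ha2) hua
  -- vu ∉ C (else adjacent to w, positive, ≠ u)
  have hwu : w ≠ u := Ne.symm hne
  have hvu_notC : vu ∉ C := by
    intro h
    exact hvu_bad w hwu (Or.inl hw1) (hC h hwC hvu_ne_w)
  have hvw_notC : vw ∉ C := by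
    intro h
    exact hvw_bad u hne (Or.inl hu1) (hC h huC hvw_ne_u)
  have hvuC' : vu ∈ C' := by
    have := hUnion ▸ (mem_univ vu)
    rcases ((Set.ext_iff.mp hUnion vu).mpr (mem_univ vu)) with h | h
    · exact absurd h hvu_notC
    · exact h
  have hvwC' : vw ∈ C' := by
    rcases ((Set.ext_iff.mp hUnion vw).mpr (mem_univ vw)) with h | h
    · exact absurd h hvw_notC
    · exact h
  -- vu ≠ vw
  have hvune : vu ≠ vw := by
    rintro rfl
    -- totality of g at vu gives a positive neighbor y; y ≠ u or y = u, but also avoid w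
    obtain ⟨⟨_, htot⟩, _⟩ := hg
    have hvumem : vu ∈ Vlevel g 1 ∪ Vlevel g 2 := by
      rcases hvu_pos with h | h
      · exact Or.inl h
      · exact Or.inr h
    obtain ⟨y, hy, hadj⟩ := htot vu hvumem
    have hy' : g y = 1 ∨ g y = 2 := by
      rcases hy with h | h
      · exact Or.inl h
      · exact Or.inr h
    by_cases hyu : y = u
    · subst hyu; exact hvw_bad y hne hy' hadj
    · exact hvu_bad y hyu hy' hadj
  -- vw is a positive neighbor of vu distinct from u: contradiction
  exact hvu_bad vw hvw_ne_u (by rcases hvw_pos with h | h; exact Or.inl h; exact Or.inr h)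
    (hC' hvuC' hvwC' hvune)

/-- on a cobipartite graph with clique partition `C₁, C₂`, every minimal
total Roman dominating function `g` with `V_2(g) = A` satisfies
`|(V_1(g) ∩ C_i) ∖ V_1(f_A)| ≤ 1` where `f_A = 2·χ_A + χ_{V∖N[A]}`. -/
theorem stmt14 [Fintype V] (G : SimpleGraph V) (C1 C2 : Set V)
    (hUnion : C1 ∪ C2 = Set.univ) (hDisj : Disjoint C1 C2)
    (hC1 : G.IsClique C1) (hC2 : G.IsClique C2)
    (A : Set V) (g : V → ℕ)
    (hg : MinimalWrt (IsTRDF G) g) (hg2 : Vlevel g 2 = A) :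
    ((Vlevel g 1 ∩ C1) \
        Vlevel (fun v => 2 * chi A v + chi (closedNbhdSet G A)ᶜ v) 1).ncard ≤ 1 ∧
    ((Vlevel g 1 ∩ C2) \
        Vlevel (fun v => 2 * chi A v + chi (closedNbhdSet G A)ᶜ v) 1).ncard ≤ 1 := by
  classical
  subst hg2
  have main : ∀ (C C' : Set V), C ∪ C' = Set.univ → G.IsClique C → G.IsClique C' →
      ((Vlevel g 1 ∩ C) \
        Vlevel (fun v => 2 * chi (Vlevel g 2) v +
          chi (closedNbhdSet G (Vlevel g 2))ᶜ v) 1).ncard ≤ 1 := by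
    intro C C' hU hc hc'
    have hsub : ∀ v ∈ (Vlevel g 1 ∩ C) \
        Vlevel (fun v => 2 * chi (Vlevel g 2) v +
          chi (closedNbhdSet G (Vlevel g 2))ᶜ v) 1,
        g v = 1 ∧ v ∈ C ∧ v ∈ closedNbhdSet G (Vlevel g 2) := by
      rintro v ⟨⟨hv1, hvC⟩, hvN⟩
      have hv1' : g v = 1 := hv1
      refine ⟨hv1', hvC, ?_⟩
      by_contra hN
      apply hvN
      have hvA : v ∉ Vlevel g 2 := by simp [Vlevel, hv1']
      show 2 * chi (Vlevel g 2) v + chi (closedNbhdSet G (Vlevel g 2))ᶜ v = 1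
      rw [chi, chi, Set.indicator_of_notMem hvA, Set.indicator_of_mem (show v ∈ (closedNbhdSet G (Vlevel g 2))ᶜ from hN)]
      simp
    have hss : ((Vlevel g 1 ∩ C) \
        Vlevel (fun v => 2 * chi (Vlevel g 2) v +
          chi (closedNbhdSet G (Vlevel g 2))ᶜ v) 1).Subsingleton := by
      intro x hx y hy
      obtain ⟨hx1, hxC, hxN⟩ := hsub x hx
      obtain ⟨hy1, hyC, hyN⟩ := hsub y hy
      exact key_same G C C' hU hc hc' g hg hx1 hy1 hxC hyC hxN hyN
    rcases hss.eq_empty_or_singleton with h | ⟨x, h⟩ <;> simp [h]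
  refine ⟨main C1 C2 hUnion hC1 hC2, main C2 C1 ?_ hC2 hC1⟩
  rw [Set.union_comm]; exact hUnion
end

section
/- Let G=(V,E) be a cobipartite graph of order n and A ⊆ V. Then the number of minimal total Roman dominating functions f on G with V_2(f) = A is at most n² + n + 1, i.e. |C_{𝒯ℛ𝒟ℱ,G}[A]| ≤ n² + n + 1. -/
open Set

variable {V : Type*}

/-- on a cobipartite graph of order `n`, `|C_{TRDF,G}[A]| ≤ n² + n + 1`. -/

def B0' (G : SimpleGraph V) (A : Set V) : Set V :=
  {v | v ∉ A ∧ ∀ u, G.Adj v u → u ∉ A}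

/-- Core combinatorial contradiction for cobipartite graphs. -/
lemma contra_lemma (G : SimpleGraph V) (S A D1 D2 : Set V)
    (hG1 : G.IsClique D1) (hG2 : G.IsClique D2) (hun : D1 ∪ D2 = Set.univ)
    (hAS : A ⊆ S) {x1 x2 x3 u1 u2 : V}
    (hx1D : x1 ∈ D1) (hx2D : x2 ∈ D1)
    (h12 : x1 ≠ x2) (h13 : x1 ≠ x3) (h23 : x2 ≠ x3)
    (hx1S : x1 ∈ S) (hx2S : x2 ∈ S) (hx3S : x3 ∈ S)
    (hx2A : x2 ∉ A)
    (hu1 : u1 ∈ S ∧ u1 ≠ x1 ∧ G.Adj u1 x1 ∧ ∀ w ∈ S, G.Adj u1 w → w = x1)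
    (hu2 : u2 ∈ S ∧ u2 ≠ x2 ∧ G.Adj u2 x2 ∧ ∀ w ∈ S, G.Adj u2 w → w = x2)
    (hN1 : ∃ a ∈ A, G.Adj x1 a) (hN3 : ∃ a ∈ A, G.Adj x3 a) : False := by
  obtain ⟨hu1S, hu1x, hadj1, hp1⟩ := hu1
  obtain ⟨hu2S, hu2x, hadj2, hp2⟩ := hu2
  obtain ⟨a1, ha1A, ha1adj⟩ := hN1
  obtain ⟨a3, ha3A, ha3adj⟩ := hN3
  have hmem : ∀ v : V, v ∈ D1 ∨ v ∈ D2 := fun v => hun.ge (Set.mem_univ v)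
  rcases hmem u1 with hu1D | hu1D
  · -- u1 ∈ D1, hence u1 = x2
    have hu1x2 : u1 = x2 := by
      by_contra hne
      exact h12 (hp1 x2 hx2S (hG1 hu1D hx2D hne)).symm
    rcases hmem u2 with hu2D | hu2D
    · have hu2x1 : u2 = x1 := by
        by_contra hne
        exact h12 (hp2 x1 hx1S (hG1 hu2D hx1D hne))
      have : a1 = x2 := hp2 a1 (hAS ha1A) (by rw [hu2x1]; exact ha1adj)
      exact hx2A (this ▸ ha1A)
    · rcases hmem x3 with hx3D | hx3D
      · by_cases h : x3 = u1
        · exact h23 (by rw [h, hu1x2])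
        · exact h13 (hp1 x3 hx3S (hG1 hu1D hx3D (Ne.symm h))).symm
      · by_cases h : x3 = u2
        · have : a3 = x2 := hp2 a3 (hAS ha3A) (by rw [← h]; exact ha3adj)
          exact hx2A (this ▸ ha3A)
        · exact h23 (hp2 x3 hx3S (hG2 hu2D hx3D (Ne.symm h))).symm
  · rcases hmem u2 with hu2D | hu2D
    · have hu2x1 : u2 = x1 := by
        by_contra hne
        exact h12 (hp2 x1 hx1S (hG1 hu2D hx1D hne))
      have : a1 = x2 := hp2 a1 (hAS ha1A) (by rw [hu2x1]; exact ha1adj)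
      exact hx2A (this ▸ ha1A)
    · by_cases h : u2 = u1
      · exact h12 (hp2 x1 hx1S (by rw [h]; exact hadj1))
      · have hu2x1 : u2 = x1 := hp1 u2 hu2S (hG2 hu1D hu2D (Ne.symm h))
        have : a1 = x2 := hp2 a1 (hAS ha1A) (by rw [hu2x1]; exact ha1adj)
        exact hx2A (this ▸ ha1A)

lemma witness_lemma (G : SimpleGraph V) (A : Set V) (f : V → ℕ)
    (hmin : MinimalWrt (IsTRDF G) f) (hA : Vlevel f 2 = A)
    {x : V} (hx : x ∈ Vlevel f 1 \ B0' G A) :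
    ∃ u ∈ Vlevel f 1 ∪ Vlevel f 2, u ≠ x ∧ G.Adj u x ∧
      ∀ w ∈ Vlevel f 1 ∪ Vlevel f 2, G.Adj u w → w = x := by
  classical
  have hfx : f x = 1 := hx.1
  have hxA : x ∉ A := by
    intro h
    rw [← hA] at h
    have : f x = 2 := h
    omega
  have hN : ∃ a, G.Adj x a ∧ a ∈ A := by
    have := hx.2
    simp only [B0', Set.mem_setOf_eq, not_and, not_forall] at this
    obtain ⟨u, hu, hu2⟩ := this hxA
    exact ⟨u, hu, by simpa using hu2⟩
  obtain ⟨a, haadj, haA⟩ := hN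
  have hfa : f a = 2 := by rw [← hA] at haA; exact haA
  -- first produce u with the privateness property
  have main : ∃ u ∈ Vlevel f 1 ∪ Vlevel f 2, u ≠ x ∧
      ∀ w ∈ Vlevel f 1 ∪ Vlevel f 2, G.Adj u w → w = x := by
    by_contra h
    push_neg at h
    set g : V → ℕ := fun v => if v = x then 0 else f v with hg
    have hgtrdf : IsTRDF G g := by
      constructor
      · constructor
        · intro v
          by_cases hv : v = x <;> simp [hg, hv, hmin.1.1.1 v]
        · intro v hv
          by_cases hvx : v = x
          · refine ⟨a, by rw [hvx]; exact haadj, ?_⟩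
            have hax : a ≠ x := by intro h; rw [h] at hfa; omega
            simp [hg, hax, hfa]
          · have hfv : f v = 0 := by simpa [hg, hvx] using hv
            obtain ⟨u, huadj, hu2⟩ := hmin.1.1.2 v hfv
            have hux : u ≠ x := by intro h; rw [h] at hu2; omega
            exact ⟨u, huadj, by simp [hg, hux, hu2]⟩
      · intro v hv
        have hvx : v ≠ x := by
          intro h
          rcases hv with hv | hv <;> { rw [h] at hv; simp [Vlevel, hg] at hv }
        have hvS : v ∈ Vlevel f 1 ∪ Vlevel f 2 := by
          rcases hv with hv | hv
          · exact Or.inl (by simpa [Vlevel, hg, hvx] using hv)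
          · exact Or.inr (by simpa [Vlevel, hg, hvx] using hv)
        obtain ⟨w, hwS, hwadj, hwx⟩ := h v hvS hvx
        refine ⟨w, ?_, hwadj⟩
        rcases hwS with hw | hw
        · exact Or.inl (by simpa [Vlevel, hg, hwx] using hw)
        · exact Or.inr (by simpa [Vlevel, hg, hwx] using hw)
    have hle : g ≤ f := by
      intro v
      by_cases hv : v = x <;> simp [hg, hv]
    have := hmin.2 g hgtrdf hle
    have : g x = f x := by rw [this]
    simp [hg, hfx] at this
  obtain ⟨u, huS, hux, hp⟩ := main
  obtain ⟨w, hwS, hwadj⟩ := hmin.1.2 u huS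
  have hwx : w = x := hp w hwS hwadj
  exact ⟨u, huS, hux, by rw [← hwx]; exact hwadj, hp⟩


lemma key_lemma_s15 [Fintype V] (G : SimpleGraph V) (C1 C2 : Set V)
    (hun : C1 ∪ C2 = Set.univ) (h1 : G.IsClique C1) (h2 : G.IsClique C2)
    (A : Set V) (f : V → ℕ)
    (hmin : MinimalWrt (IsTRDF G) f) (hA : Vlevel f 2 = A) :
    (Vlevel f 1 \ B0' G A).ncard ≤ 2 := by
  by_contra h
  push_neg at h
  obtain ⟨x1, hx1, x2, hx2, x3, hx3, h12, h13, h23⟩ :=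
    (Set.two_lt_ncard (Set.toFinite _)).mp h
  set S := Vlevel f 1 ∪ Vlevel f 2 with hS
  have hAS : A ⊆ S := by rw [← hA]; exact Set.subset_union_right
  have hSx : ∀ x : V, x ∈ Vlevel f 1 \ B0' G A → x ∈ S ∧ x ∉ A ∧ ∃ a ∈ A, G.Adj x a := by
    intro x hx
    have hfx : f x = 1 := hx.1
    have hxA : x ∉ A := by
      intro hmem
      rw [← hA] at hmem
      have : f x = 2 := hmem
      omega
    refine ⟨Or.inl hx.1, hxA, ?_⟩
    have := hx.2
    simp only [B0', Set.mem_setOf_eq, not_and, not_forall] at this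
    obtain ⟨u, hu, hu2⟩ := this hxA
    exact ⟨u, by simpa using hu2, hu⟩
  obtain ⟨hx1S, hx1A, hN1⟩ := hSx x1 hx1
  obtain ⟨hx2S, hx2A, hN2⟩ := hSx x2 hx2
  obtain ⟨hx3S, hx3A, hN3⟩ := hSx x3 hx3
  obtain ⟨u1, hu1S, hu1⟩ := witness_lemma G A f hmin hA hx1
  obtain ⟨u2, hu2S, hu2⟩ := witness_lemma G A f hmin hA hx2
  obtain ⟨u3, hu3S, hu3⟩ := witness_lemma G A f hmin hA hx3
  have hmem : ∀ v : V, v ∈ C1 ∨ v ∈ C2 := fun v => hun.ge (Set.mem_univ v)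
  have hun' : C2 ∪ C1 = Set.univ := by rw [Set.union_comm]; exact hun
  rcases hmem x1 with hm1 | hm1 <;> rcases hmem x2 with hm2 | hm2 <;>
    rcases hmem x3 with hm3 | hm3
  · exact contra_lemma G S A C1 C2 h1 h2 hun hAS hm1 hm2 h12 h13 h23
      hx1S hx2S hx3S hx2A ⟨hu1S, hu1⟩ ⟨hu2S, hu2⟩ hN1 hN3
  · exact contra_lemma G S A C1 C2 h1 h2 hun hAS hm1 hm2 h12 h13 h23
      hx1S hx2S hx3S hx2A ⟨hu1S, hu1⟩ ⟨hu2S, hu2⟩ hN1 hN3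
  · exact contra_lemma G S A C1 C2 h1 h2 hun hAS hm1 hm3 h13 h12 (Ne.symm h23)
      hx1S hx3S hx2S hx3A ⟨hu1S, hu1⟩ ⟨hu3S, hu3⟩ hN1 hN2
  · exact contra_lemma G S A C2 C1 h2 h1 hun' hAS hm2 hm3 h23 (Ne.symm h12) (Ne.symm h13)
      hx2S hx3S hx1S hx3A ⟨hu2S, hu2⟩ ⟨hu3S, hu3⟩ hN2 hN1
  · exact contra_lemma G S A C1 C2 h1 h2 hun hAS hm2 hm3 h23 (Ne.symm h12) (Ne.symm h13)
      hx2S hx3S hx1S hx3A ⟨hu2S, hu2⟩ ⟨hu3S, hu3⟩ hN2 hN1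
  · exact contra_lemma G S A C2 C1 h2 h1 hun' hAS hm1 hm3 h13 h12 (Ne.symm h23)
      hx1S hx3S hx2S hx3A ⟨hu1S, hu1⟩ ⟨hu3S, hu3⟩ hN1 hN2
  · exact contra_lemma G S A C2 C1 h2 h1 hun' hAS hm1 hm2 h12 h13 h23
      hx1S hx2S hx3S hx2A ⟨hu1S, hu1⟩ ⟨hu2S, hu2⟩ hN1 hN3
  · exact contra_lemma G S A C2 C1 h2 h1 hun' hAS hm1 hm2 h12 h13 h23
      hx1S hx2S hx3S hx2A ⟨hu1S, hu1⟩ ⟨hu2S, hu2⟩ hN1 hN3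

lemma B0_subset (G : SimpleGraph V) (A : Set V) (f : V → ℕ)
    (hrdf : IsRDF G f) (hA : Vlevel f 2 = A) : B0' G A ⊆ Vlevel f 1 := by
  intro v hv
  have hle : f v ≤ 2 := hrdf.1 v
  have h2 : f v ≠ 2 := by
    intro h
    exact hv.1 (hA ▸ (h : v ∈ Vlevel f 2))
  have h0 : f v ≠ 0 := by
    intro h
    obtain ⟨u, hadj, hu⟩ := hrdf.2 v h
    exact hv.2 u hadj (hA ▸ (hu : u ∈ Vlevel f 2))
  show f v = 1
  omega

lemma determined (G : SimpleGraph V) (A : Set V) {f g : V → ℕ}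
    (hf : f ∈ CSet (IsTRDF G) A) (hg : g ∈ CSet (IsTRDF G) A)
    (h1 : Vlevel f 1 = Vlevel g 1) : f = g := by
  have h2 : Vlevel f 2 = Vlevel g 2 := by rw [hf.2, hg.2]
  funext v
  have hfle : f v ≤ 2 := hf.1.1.1.1 v
  have hgle : g v ≤ 2 := hg.1.1.1.1 v
  have e1 : f v = 1 ↔ g v = 1 := by
    have : v ∈ Vlevel f 1 ↔ v ∈ Vlevel g 1 := by rw [h1]
    simpa [Vlevel] using this
  have e2 : f v = 2 ↔ g v = 2 := by
    have : v ∈ Vlevel f 2 ↔ v ∈ Vlevel g 2 := by rw [h2]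
    simpa [Vlevel] using this
  omega

open Classical in
noncomputable def enc (X : Set V) : Option (V × V) :=
  if h : ∃ p : V × V, X = {p.1, p.2} then some (Classical.choose h) else none

lemma enc_inj {X Y : Set V} (hXf : X.Finite) (hYf : Y.Finite)
    (hX2 : X.ncard ≤ 2) (hY2 : Y.ncard ≤ 2) (h : enc X = enc Y) : X = Y := by
  have rep : ∀ Z : Set V, Z.Finite → Z.ncard ≤ 2 → Z.Nonempty →
      ∃ p : V × V, Z = {p.1, p.2} := by
    intro Z hZ hle hne
    have h1 : 0 < Z.ncard := (Set.ncard_pos hZ).mpr hne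
    rcases Nat.lt_or_ge Z.ncard 2 with hlt | hge
    · have : Z.ncard = 1 := by omega
      obtain ⟨a, ha⟩ := Set.ncard_eq_one.mp this
      exact ⟨(a, a), by simp [ha]⟩
    · have : Z.ncard = 2 := by omega
      obtain ⟨a, b, hab, hZab⟩ := Set.ncard_eq_two.mp this
      exact ⟨(a, b), hZab⟩
  unfold enc at h
  by_cases hx : ∃ p : V × V, X = {p.1, p.2}
  · by_cases hy : ∃ p : V × V, Y = {p.1, p.2}
    · rw [dif_pos hx, dif_pos hy] at h
      have heq := Option.some.inj h
      rw [Classical.choose_spec hx, Classical.choose_spec hy, heq]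
    · rw [dif_pos hx, dif_neg hy] at h
      exact absurd h (by simp)
  · by_cases hy : ∃ p : V × V, Y = {p.1, p.2}
    · rw [dif_neg hx, dif_pos hy] at h
      exact absurd h (by simp)
    have hXe : X = ∅ := by
      by_contra hne
      exact hx (rep X hXf hX2 (Set.nonempty_iff_ne_empty.mpr hne))
    have hYe : Y = ∅ := by
      by_contra hne
      exact hy (rep Y hYf hY2 (Set.nonempty_iff_ne_empty.mpr hne))
    rw [hXe, hYe]

theorem stmt15 [Fintype V] (G : SimpleGraph V)
    (hcobi : ∃ C1 C2 : Set V, C1 ∪ C2 = Set.univ ∧ Disjoint C1 C2 ∧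
      G.IsClique C1 ∧ G.IsClique C2)
    (A : Set V) :
    (CSet (IsTRDF G) A).ncard ≤ (Fintype.card V) ^ 2 + Fintype.card V + 1 := by
  classical
  obtain ⟨C1, C2, hun, -, h1, h2⟩ := hcobi
  set Φ : (V → ℕ) → Option (V × V) := fun f => enc (Vlevel f 1 \ B0' G A) with hΦ
  have hinj : Set.InjOn Φ (CSet (IsTRDF G) A) := by
    intro f hf g hg h
    have hfk := key_lemma_s15 G C1 C2 hun h1 h2 A f hf.1 hf.2
    have hgk := key_lemma_s15 G C1 C2 hun h1 h2 A g hg.1 hg.2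
    have hXY : Vlevel f 1 \ B0' G A = Vlevel g 1 \ B0' G A :=
      enc_inj (Set.toFinite _) (Set.toFinite _) hfk hgk h
    have hbf : B0' G A ⊆ Vlevel f 1 := B0_subset G A f hf.1.1.1 hf.2
    have hbg : B0' G A ⊆ Vlevel g 1 := B0_subset G A g hg.1.1.1 hg.2
    have hV1 : Vlevel f 1 = Vlevel g 1 := by
      rw [← Set.diff_union_of_subset hbf, ← Set.diff_union_of_subset hbg, hXY]
    exact determined G A hf hg hV1
  calc (CSet (IsTRDF G) A).ncard
      = (Φ '' CSet (IsTRDF G) A).ncard := (Set.ncard_image_of_injOn hinj).symm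
    _ ≤ (Set.univ : Set (Option (V × V))).ncard :=
        Set.ncard_le_ncard (Set.subset_univ _) Set.finite_univ
    _ = Fintype.card V ^ 2 + 1 := by
        simp [Set.ncard_univ, Nat.card_eq_fintype_card, sq]
    _ ≤ Fintype.card V ^ 2 + Fintype.card V + 1 := by omega
end

section
/- Let G=(V,E) be a connected split graph without universal vertices. Then a function f : V → {0,1,2} is a total Roman dominating function on G if and only if f is a connected Roman dominating function on G. -/
open Set

variable {V : Type*}

/-- on a connected split graph without universal vertices, a function is
a total Roman dominating function iff it is a connected Roman dominating function. -/
theorem stmt16 [Fintype V] (G : SimpleGraph V) (hconn : G.Connected)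
    (C I : Set V) (hUnion : C ∪ I = Set.univ) (hDisj : Disjoint C I)
    (hC : G.IsClique C) (hI : ∀ v ∈ I, ∀ u ∈ I, ¬ G.Adj v u)
    (hNoUniv : ∀ v : V, ∃ u : V, u ≠ v ∧ ¬ G.Adj v u)
    (f : V → ℕ) (hf : ∀ v, f v ≤ 2) :
    IsTRDF G f ↔ IsCRDF G f := by
  set S := Vlevel f 1 ∪ Vlevel f 2 with hSdef
  have hmemS : ∀ v, v ∈ S ↔ f v = 1 ∨ f v = 2 := fun v => Iff.rfl
  constructor
  · rintro ⟨hrdf, htot⟩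
    refine ⟨hrdf, ?_⟩
    -- S is nonempty
    have hne : S.Nonempty := by
      obtain ⟨v⟩ := hconn.nonempty
      by_cases hv : f v = 0
      · obtain ⟨u, _, hu2⟩ := hrdf.2 v hv
        exact ⟨u, Or.inr hu2⟩
      · exact ⟨v, (hmemS v).2 (by have := hf v; omega)⟩
    -- there is a vertex of S in the clique C
    obtain ⟨s, hsS⟩ := hne
    have hcex : ∃ c ∈ C, c ∈ S := by
      by_cases hsC : s ∈ C
      · exact ⟨s, hsC, hsS⟩
      · have hsI : s ∈ I := by
          have := hUnion ▸ Set.mem_univ s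
          rcases (Set.mem_union ..).1 (hUnion ▸ Set.mem_univ s) with h | h
          · exact absurd h hsC
          · exact h
        obtain ⟨t, htS, hadj⟩ := htot s hsS
        have htC : t ∈ C := by
          by_contra htC
          have htI : t ∈ I := by
            rcases (Set.mem_union ..).1 (hUnion ▸ Set.mem_univ t) with h | h
            · exact absurd h htC
            · exact h
          exact hI s hsI t htI hadj
        exact ⟨t, htC, htS⟩
    obtain ⟨c, hcC, hcS⟩ := hcex
    -- every vertex of S is reachable from c in the induced graph
    have hreach : ∀ x : ↥S, (G.induce S).Reachable x ⟨c, hcS⟩ := by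
      -- helper for clique vertices
      have hclique : ∀ x : ↥S, (x : V) ∈ C → (G.induce S).Reachable x ⟨c, hcS⟩ := by
        rintro ⟨x, hxS⟩ hxC
        by_cases hxc : x = c
        · subst hxc; rfl
        · exact SimpleGraph.Adj.reachable (hC hxC hcC hxc)
      rintro ⟨x, hxS⟩
      by_cases hxC : x ∈ C
      · exact hclique ⟨x, hxS⟩ hxC
      · have hxI : x ∈ I := by
          rcases (Set.mem_union ..).1 (hUnion ▸ Set.mem_univ x) with h | h
          · exact absurd h hxC
          · exact h
        obtain ⟨t, htS, hadj⟩ := htot x hxS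
        have htC : t ∈ C := by
          by_contra htC
          have htI : t ∈ I := by
            rcases (Set.mem_union ..).1 (hUnion ▸ Set.mem_univ t) with h | h
            · exact absurd h htC
            · exact h
          exact hI x hxI t htI hadj
        exact (SimpleGraph.Adj.reachable (show (G.induce S).Adj ⟨x, hxS⟩ ⟨t, htS⟩ from hadj)).trans
          (hclique ⟨t, htS⟩ htC)
    rw [SimpleGraph.connected_iff]
    exact ⟨fun u v => (hreach u).trans (hreach v).symm, ⟨⟨c, hcS⟩⟩⟩
  · rintro ⟨hrdf, hcon⟩
    refine ⟨hrdf, ?_⟩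
    intro v hv
    by_cases hall : ∀ w ∈ S, w = v
    · -- S = {v}: then v would be universal, contradiction
      exfalso
      obtain ⟨u, hune, hnadj⟩ := hNoUniv v
      have hu0 : f u = 0 := by
        by_contra h
        have huS : u ∈ S := (hmemS u).2 (by have := hf u; omega)
        exact hune (hall u huS)
      obtain ⟨w, hadj, hw2⟩ := hrdf.2 u hu0
      have hwv : w = v := hall w (Or.inr hw2)
      subst hwv
      exact hnadj hadj.symm
    · push_neg at hall
      obtain ⟨w, hwS, hwv⟩ := hall
      obtain ⟨p⟩ := hcon.preconnected ⟨v, hv⟩ ⟨w, hwS⟩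
      have hnil : ¬ p.Nil := SimpleGraph.Walk.not_nil_of_ne (by
        intro h; exact hwv (congrArg Subtype.val h).symm)
      obtain ⟨u, hadj, q, rfl⟩ := (SimpleGraph.Walk.not_nil_iff).1 hnil
      exact ⟨(u : V), u.2, hadj⟩
end
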